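/- Let 1 ≤ u, s ≤ n with u ≠ s. There exists a bijection between the set of maximal chains in L(D_{n,u}) that are not entirely contained in L(D_{n,u−1}) and the set of maximal chains in L(D_{n,s}) that are not entirely contained in L(D_{n,s−1}), such that corresponding chains have λ-descents at exactly the same positions: for each position i, the label sequence of one chain has λ_i > λ_{i+1} (in the lexicographic order on labels) if and only if the label sequence of the other chain does. -/

import Mathlib

/-- An element of the signed partition lattice `Π_n^B`: a partition of `{−n,…,n}` into
nonempty blocks such that the set of blocks is closed under negation and any block
containing both `i` and `−i` for some `i > 0` contains `0`. -/
structure SignedPartition (n : ℕ) where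
  blocks : Finset (Finset ℤ)
  nonempty_blocks : ∀ B ∈ blocks, B.Nonempty
  subset_ground : ∀ B ∈ blocks, B ⊆ Finset.Icc (-(n : ℤ)) (n : ℤ)
  disjoint_blocks : ∀ B ∈ blocks, ∀ C ∈ blocks, B ≠ C → Disjoint B C
  covers : ∀ x ∈ Finset.Icc (-(n : ℤ)) (n : ℤ), ∃ B ∈ blocks, x ∈ B
  neg_mem : ∀ B ∈ blocks, B.image (fun k => -k) ∈ blocks
  zero_cond : ∀ B ∈ blocks, ∀ i : ℤ, 0 < i → i ∈ B → -i ∈ B → (0 : ℤ) ∈ B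

namespace SignedPartition

variable {n : ℕ}

/-- The refinement order on `Π_n^B`: `x ≼ y` iff every block of `x` is contained in a block
of `y`. -/
def le (x y : SignedPartition n) : Prop := ∀ B ∈ x.blocks, ∃ C ∈ y.blocks, B ⊆ C

/-- The strict refinement order on `Π_n^B`. -/
def lt (x y : SignedPartition n) : Prop := le x y ∧ ¬ le y x

/-- The cover relation `x ⋖ y` in `Π_n^B`: `x ≺ y` and there is no `z` strictly between. -/
def covby (x y : SignedPartition n) : Prop := lt x y ∧ ∀ z, lt x z → ¬ lt z y

end SignedPartition
/-- A signed edge `x ⋖ y`: the zero block of `x` (the block containing `0`) is strictly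
contained in the zero block of `y`. -/
def SignedEdge {n : ℕ} (x y : SignedPartition n) : Prop :=
  ∃ B C : Finset ℤ, B ∈ x.blocks ∧ (0 : ℤ) ∈ B ∧ C ∈ y.blocks ∧ (0 : ℤ) ∈ C ∧ B ⊂ C

/-- `NormRep B i`: `B` is a normalized non-zero block with representative `i`, i.e.
`0 ∉ B`, `i = min|B|` and `i ∈ B`. -/
def NormRep (B : Finset ℤ) (i : ℕ) : Prop :=
  (0 : ℤ) ∉ B ∧ (i : ℤ) ∈ B ∧ ∀ b ∈ B, i ≤ b.natAbs

/-- The EL-labeling of `Π_n^B` with values in `ℕ × ℕ`: a coherent edge (two normalized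
non-zero blocks with representatives `i`, `j` are merged) gets label `(0, max i j)`, a
non-coherent edge (a normalized block is merged with the negative of a normalized block)
gets label `(2, min i j)`, and a signed edge gets label `(1, 1)`. -/
def ELlabel {n : ℕ} (x y : SignedPartition n) (l : ℕ × ℕ) : Prop :=
  (SignedEdge x y ∧ l = (1, 1)) ∨
  (∃ R R' : Finset ℤ, R ∈ x.blocks ∧ R' ∈ x.blocks ∧ R ≠ R' ∧
    ∃ i j : ℕ, NormRep R i ∧ NormRep R' j ∧
      ((R ∪ R' ∈ y.blocks ∧ l = (0, max i j)) ∨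
       (R ∪ R'.image (fun t => -t) ∈ y.blocks ∧ l = (2, min i j))))

/-- The (strict) lexicographic order on labels in `ℕ × ℕ`. -/
def lexLt (p q : ℕ × ℕ) : Prop := p.1 < q.1 ∨ (p.1 = q.1 ∧ p.2 < q.2)

/-- Membership in the subposet `L(D_{n,s})` of `Π_n^B`: the partition contains no block of
the form `{k, 0, −k}` with `k ∈ {s+1,…,n}`.  `L(D_{n,n}) = Π_n^B` and `L(D_{n,0}) = L(D_n)`. -/
def memLD {n : ℕ} (s : ℕ) (x : SignedPartition n) : Prop :=
  ∀ k : ℤ, (s : ℤ) < k → k ≤ (n : ℤ) → ({k, 0, -k} : Finset ℤ) ∉ x.blocks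

/-- The cover relation of the subposet `L(D_{n,s})`: both elements belong to `L(D_{n,s})`,
`x ≺ y`, and there is no element of `L(D_{n,s})` strictly between them. -/
def covLD {n : ℕ} (s : ℕ) (x y : SignedPartition n) : Prop :=
  memLD s x ∧ memLD s y ∧ SignedPartition.lt x y ∧
    ∀ z, memLD s z → SignedPartition.lt x z → ¬ SignedPartition.lt z y

/-- A maximal chain of the closed interval `[x,y]` in `L(D_{n,s})`: a list starting at `x`,
ending at `y`, each element covered (in `L(D_{n,s})`) by the next. -/
def IsChainLD {n : ℕ} (s : ℕ) (x y : SignedPartition n) (c : List (SignedPartition n)) : Prop :=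
  c.Chain' (covLD s) ∧ c.head? = some x ∧ c.getLast? = some y

/-- `ELLabelSeq c ℓ`: the list `ℓ` is the sequence of EL-labels of the consecutive cover
relations along the chain `c`. -/
def ELLabelSeq {n : ℕ} : List (SignedPartition n) → List (ℕ × ℕ) → Prop
  | [], [] => True
  | [_], [] => True
  | a :: b :: rest, l :: ls => ELlabel a b l ∧ ELLabelSeq (b :: rest) ls
  | _, _ => False

/-- A maximal chain of the lattice `L(D_{n,s})`: a saturated chain (with respect to the
cover relation of `L(D_{n,s})`) from the minimal element (all blocks are singletons) to the
maximal element (the one-block partition). -/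
def IsMaxChainLD {n : ℕ} (s : ℕ) (c : List (SignedPartition n)) : Prop :=
  c.Chain' (covLD s) ∧
  (∃ x, c.head? = some x ∧ ∀ B ∈ x.blocks, B.card = 1) ∧
  (∃ y, c.getLast? = some y ∧ y.blocks = {Finset.Icc (-(n : ℤ)) (n : ℤ)})

/-- The label sequence `ℓ` has a descent at position `i` (with respect to the lexicographic
order on labels). -/
def DescentAt (ℓ : List (ℕ × ℕ)) (i : ℕ) : Prop :=
  ∃ p q : ℕ × ℕ, ℓ[i]? = some p ∧ ℓ[i + 1]? = some q ∧ lexLt q p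

namespace ChainsBij

/-! ### The ground relabeling function -/

def hfun (u s : ℤ) : ℤ → ℤ := fun j =>
  if j = u then s else if u < j ∧ j ≤ s then j - 1 else if s ≤ j ∧ j < u then j + 1 else j

def gfun (u s : ℤ) : ℤ → ℤ := fun k => if 0 ≤ k then hfun u s k else -(hfun u s (-k))

variable {u s : ℤ}

lemma hfun_pos (hu : 1 ≤ u) (hs : 1 ≤ s) {j : ℤ} (hj : 1 ≤ j) : 1 ≤ hfun u s j := by
  unfold hfun; split_ifs <;> omega

lemma hfun_zero (hu : 1 ≤ u) (hs : 1 ≤ s) : hfun u s 0 = 0 := by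
  unfold hfun; split_ifs <;> omega

lemma hfun_inv (hu : 1 ≤ u) (hs : 1 ≤ s) (j : ℤ) : hfun s u (hfun u s j) = j := by
  unfold hfun; split_ifs <;> omega

lemma gfun_zero (hu : 1 ≤ u) (hs : 1 ≤ s) : gfun u s 0 = 0 := by
  unfold gfun; rw [if_pos le_rfl]; exact hfun_zero hu hs

lemma gfun_inv (hu : 1 ≤ u) (hs : 1 ≤ s) (k : ℤ) : gfun s u (gfun u s k) = k := by
  unfold gfun
  by_cases hk : 0 ≤ k
  · rw [if_pos hk]
    by_cases hk0 : k = 0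
    · subst hk0; rw [hfun_zero hu hs, if_pos le_rfl, hfun_zero hs hu]
    · have h1 : 1 ≤ hfun u s k := hfun_pos hu hs (by omega)
      rw [if_pos (by omega)]; exact hfun_inv hu hs k
  · rw [if_neg hk]
    have h1 : 1 ≤ hfun u s (-k) := hfun_pos hu hs (by omega)
    rw [if_neg (by omega), neg_neg, hfun_inv hu hs, neg_neg]

lemma gfun_neg (hu : 1 ≤ u) (hs : 1 ≤ s) (k : ℤ) : gfun u s (-k) = -(gfun u s k) := by
  unfold gfun
  by_cases hk0 : k = 0
  · subst hk0; simp [hfun_zero hu hs]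
  · by_cases hk : 0 ≤ k
    · rw [if_neg (by omega), if_pos hk, neg_neg]
    · rw [if_pos (by omega), if_neg hk, neg_neg]

lemma gfun_inj (hu : 1 ≤ u) (hs : 1 ≤ s) {a b : ℤ} (h : gfun u s a = gfun u s b) : a = b := by
  have := gfun_inv hu hs a; rw [h, gfun_inv hu hs b] at this; exact this.symm

lemma gfun_eq_zero (hu : 1 ≤ u) (hs : 1 ≤ s) {k : ℤ} (h : gfun u s k = 0) : k = 0 :=
  gfun_inj hu hs (by rw [h, gfun_zero hu hs])

lemma gfun_u (hu : 1 ≤ u) (hs : 1 ≤ s) : gfun u s u = s := by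
  unfold gfun hfun; rw [if_pos (by omega), if_pos rfl]

lemma gfun_pos (hu : 1 ≤ u) (hs : 1 ≤ s) {k : ℤ} (hk : 1 ≤ k) : 1 ≤ gfun u s k := by
  unfold gfun; rw [if_pos (by omega)]; exact hfun_pos hu hs hk

lemma gfun_Icc {n : ℤ} (hu : 1 ≤ u) (hun : u ≤ n) (hs : 1 ≤ s) (hsn : s ≤ n)
    {k : ℤ} (h1 : -n ≤ k) (h2 : k ≤ n) : -n ≤ gfun u s k ∧ gfun u s k ≤ n := by
  unfold gfun hfun; split_ifs <;> omega

lemma gfun_natAbs (hu : 1 ≤ u) (hs : 1 ≤ s) {k : ℤ} (hk : k ≠ 0) :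
    ((gfun u s k).natAbs : ℤ) = gfun u s (k.natAbs : ℤ) := by
  rcases lt_trichotomy k 0 with h | h | h
  · have hk' : (k.natAbs : ℤ) = -k := by omega
    rw [hk']
    have : gfun u s k = -(gfun u s (-k)) := by rw [← gfun_neg hu hs, neg_neg]
    rw [this]
    have h1 : 1 ≤ gfun u s (-k) := gfun_pos hu hs (by omega)
    omega
  · exact absurd h hk
  · have hk' : (k.natAbs : ℤ) = k := by omega
    rw [hk']
    have h1 : 1 ≤ gfun u s k := gfun_pos hu hs h
    omega

lemma gfun_mono {n : ℤ} (hu : 1 ≤ u) (hun : u ≤ n) (hs : 1 ≤ s) (hsn : s ≤ n)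
    {a b : ℤ} (ha1 : 1 ≤ a) (han : a ≤ n) (hau : a ≠ u) (hb1 : 1 ≤ b) (hbn : b ≤ n)
    (hbu : b ≠ u) : a < b ↔ gfun u s a < gfun u s b := by
  unfold gfun hfun; split_ifs <;> omega

lemma gfun_range {n : ℤ} (hu : 1 ≤ u) (hun : u ≤ n) (hs : 1 ≤ s) (hsn : s ≤ n)
    {a : ℤ} (ha1 : 1 ≤ a) (han : a ≤ n) (hau : a ≠ u) :
    1 ≤ gfun u s a ∧ gfun u s a ≤ n ∧ gfun u s a ≠ s := by
  unfold gfun hfun; split_ifs <;> omega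

end ChainsBij
namespace ChainsBij

set_option linter.unusedVariables false
set_option autoImplicit false

open SignedPartition (le lt covby)

variable {n : ℕ}

/-! ### Basic facts about signed partitions -/

def negF (B : Finset ℤ) : Finset ℤ := B.image (fun k => -k)

lemma mem_negF {B : Finset ℤ} {a : ℤ} : a ∈ negF B ↔ -a ∈ B := by
  simp only [negF, Finset.mem_image]
  constructor
  · rintro ⟨b, hb, rfl⟩; simpa using hb
  · intro h; exact ⟨-a, h, by ring⟩

lemma negF_negF (B : Finset ℤ) : negF (negF B) = B := by
  ext a; simp [mem_negF]

lemma negF_union (B C : Finset ℤ) : negF (B ∪ C) = negF B ∪ negF C := by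
  ext a; simp [mem_negF, Finset.mem_union]

lemma negF_nonempty {B : Finset ℤ} (h : B.Nonempty) : (negF B).Nonempty := by
  obtain ⟨b, hb⟩ := h; exact ⟨-b, mem_negF.2 (by simpa using hb)⟩

lemma negF_mem_blocks {x : SignedPartition n} {B : Finset ℤ} (h : B ∈ x.blocks) :
    negF B ∈ x.blocks := x.neg_mem B h

lemma sp_ext {x y : SignedPartition n} (h : x.blocks = y.blocks) : x = y := by
  cases x; cases y; simp_all

lemma block_eq_of_mem {x : SignedPartition n} {B C : Finset ℤ} (hB : B ∈ x.blocks)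
    (hC : C ∈ x.blocks) {t : ℤ} (htB : t ∈ B) (htC : t ∈ C) : B = C := by
  by_contra hne
  exact Finset.disjoint_left.1 (x.disjoint_blocks B hB C hC hne) htB htC

lemma exists_zeroBlock (x : SignedPartition n) : ∃ Z ∈ x.blocks, (0 : ℤ) ∈ Z :=
  x.covers 0 (by simp)

lemma negF_zeroBlock {x : SignedPartition n} {Z : Finset ℤ} (hZ : Z ∈ x.blocks)
    (h0 : (0 : ℤ) ∈ Z) : negF Z = Z :=
  block_eq_of_mem (negF_mem_blocks hZ) hZ (mem_negF.2 (by simpa using h0)) h0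

lemma le_refl' (x : SignedPartition n) : le x x := fun B hB => ⟨B, hB, Finset.Subset.refl B⟩

lemma le_trans' {x y z : SignedPartition n} (h1 : le x y) (h2 : le y z) : le x z := by
  intro B hB
  obtain ⟨C, hC, hBC⟩ := h1 B hB
  obtain ⟨D, hD, hCD⟩ := h2 C hC
  exact ⟨D, hD, hBC.trans hCD⟩

/-- Each block of the coarser partition is a union of blocks of the finer one. -/
lemma cell {x y : SignedPartition n} (h : le x y) {W : Finset ℤ} (hW : W ∈ y.blocks)
    {t : ℤ} (ht : t ∈ W) : ∃ D ∈ x.blocks, t ∈ D ∧ D ⊆ W := by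
  obtain ⟨D, hD, htD⟩ := x.covers t (y.subset_ground W hW ht)
  obtain ⟨W', hW', hDW'⟩ := h D hD
  have : W' = W := block_eq_of_mem hW' hW (hDW' htD) ht
  exact ⟨D, hD, htD, this ▸ hDW'⟩

/-- If `x ≤ y`, a block of `x` meeting a block of `y` is contained in it. -/
lemma sub_of_meet {x y : SignedPartition n} (h : le x y) {D W : Finset ℤ}
    (hD : D ∈ x.blocks) (hW : W ∈ y.blocks) {t : ℤ} (htD : t ∈ D) (htW : t ∈ W) : D ⊆ W := by
  obtain ⟨W', hW', hDW'⟩ := h D hD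
  have : W' = W := block_eq_of_mem hW' hW (hDW' htD) htW
  exact this ▸ hDW'

lemma le_antisymm' {x y : SignedPartition n} (h1 : le x y) (h2 : le y x) : x = y := by
  apply sp_ext
  apply Finset.Subset.antisymm
  · intro B hB
    obtain ⟨C, hC, hBC⟩ := h1 B hB
    obtain ⟨D, hD, hCD⟩ := h2 C hC
    obtain ⟨b, hb⟩ := x.nonempty_blocks B hB
    have hBD : B = D := block_eq_of_mem hB hD hb (hCD (hBC hb))
    have : B = C := Finset.Subset.antisymm hBC (hBD ▸ hCD)
    exact this ▸ hC
  · intro B hB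
    obtain ⟨C, hC, hBC⟩ := h2 B hB
    obtain ⟨D, hD, hCD⟩ := h1 C hC
    obtain ⟨b, hb⟩ := y.nonempty_blocks B hB
    have hBD : B = D := block_eq_of_mem hB hD hb (hCD (hBC hb))
    have : B = C := Finset.Subset.antisymm hBC (hBD ▸ hCD)
    exact this ▸ hC

lemma lt_iff' {x y : SignedPartition n} : lt x y ↔ le x y ∧ x ≠ y := by
  constructor
  · rintro ⟨h1, h2⟩
    refine ⟨h1, fun h => h2 (h ▸ le_refl' x)⟩
  · rintro ⟨h1, h2⟩
    exact ⟨h1, fun h => h2 (le_antisymm' h1 h)⟩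

lemma zero_mono {x y : SignedPartition n} (h : le x y) {Z W : Finset ℤ}
    (hZ : Z ∈ x.blocks) (h0Z : (0:ℤ) ∈ Z) (hW : W ∈ y.blocks) (h0W : (0:ℤ) ∈ W) : Z ⊆ W :=
  sub_of_meet h hZ hW h0Z h0W

end ChainsBij
namespace ChainsBij

set_option linter.unusedVariables false
set_option autoImplicit false

open SignedPartition (le lt covby)

variable {n : ℕ}

/-! ### Merge and absorb specifications -/

lemma negF_ground {B : Finset ℤ} (h : B ⊆ Finset.Icc (-(n:ℤ)) (n:ℤ)) :
    negF B ⊆ Finset.Icc (-(n:ℤ)) (n:ℤ) := by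
  intro a ha
  have := h (mem_negF.1 ha)
  simp only [Finset.mem_Icc] at *
  omega

lemma negF_ne_self {x : SignedPartition n} {B : Finset ℤ} (hB : B ∈ x.blocks)
    (h0B : (0:ℤ) ∉ B) : negF B ≠ B := by
  intro h
  obtain ⟨b, hb⟩ := x.nonempty_blocks B hB
  have hb0 : b ≠ 0 := fun hh => h0B (hh ▸ hb)
  have hb' : b ∈ negF B := by rw [h]; exact hb
  have hnb : -b ∈ B := mem_negF.1 hb'
  rcases lt_trichotomy b 0 with hlt | he | hgt
  · exact h0B (x.zero_cond B hB (-b) (by omega) hnb (by simpa using hb))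
  · exact hb0 he
  · exact h0B (x.zero_cond B hB b hgt hb hnb)

lemma zero_not_mem_negF {B : Finset ℤ} (h : (0:ℤ) ∉ B) : (0:ℤ) ∉ negF B := by
  intro hc; exact h (by simpa using mem_negF.1 hc)

lemma negF_inj {B C : Finset ℤ} (h : negF B = negF C) : B = C := by
  rw [← negF_negF B, h, negF_negF]

lemma eq_of_blocks_subset {x w : SignedPartition n} (h : x.blocks ⊆ w.blocks) : w = x := by
  apply sp_ext
  apply Finset.Subset.antisymm
  · intro V hV
    obtain ⟨t, ht⟩ := w.nonempty_blocks V hV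
    obtain ⟨D, hD, htD⟩ := x.covers t (w.subset_ground V hV ht)
    have : V = D := block_eq_of_mem hV (h hD) ht htD
    exact this ▸ hD
  · exact h

def mergeBlocks (x : SignedPartition n) (B C : Finset ℤ) : Finset (Finset ℤ) :=
  (x.blocks \ {B, C, negF B, negF C}) ∪ {B ∪ C, negF (B ∪ C)}

structure MergeSpec (x y : SignedPartition n) (B C : Finset ℤ) : Prop where
  hB : B ∈ x.blocks
  hC : C ∈ x.blocks
  h0B : (0:ℤ) ∉ B
  h0C : (0:ℤ) ∉ C
  hBC : B ≠ C
  hCnB : C ≠ negF B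
  hy : y.blocks = mergeBlocks x B C

structure AbsorbSpec (x y : SignedPartition n) (Z B : Finset ℤ) : Prop where
  hZ : Z ∈ x.blocks
  h0Z : (0:ℤ) ∈ Z
  hB : B ∈ x.blocks
  h0B : (0:ℤ) ∉ B
  hy : y.blocks = (x.blocks \ {Z, B, negF B}) ∪ {Z ∪ B ∪ negF B}

namespace MergeSpec

variable {x y : SignedPartition n} {B C : Finset ℤ}

lemma hBnC (h : MergeSpec x y B C) : B ≠ negF C := fun hh => h.hCnB (negF_inj (by rw [← hh, negF_negF]))

lemma disjBC (h : MergeSpec x y B C) : Disjoint B C := x.disjoint_blocks B h.hB C h.hC h.hBC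

lemma hnBmem (h : MergeSpec x y B C) : negF B ∈ x.blocks := negF_mem_blocks h.hB

lemma hnCmem (h : MergeSpec x y B C) : negF C ∈ x.blocks := negF_mem_blocks h.hC

lemma h0M (h : MergeSpec x y B C) : (0:ℤ) ∉ B ∪ C := by
  simp only [Finset.mem_union]; rintro (hc | hc) <;> [exact h.h0B hc; exact h.h0C hc]

lemma hMmem (h : MergeSpec x y B C) : B ∪ C ∈ y.blocks := by
  rw [h.hy]; exact Finset.mem_union_right _ (by simp)

lemma hnMmem (h : MergeSpec x y B C) : negF (B ∪ C) ∈ y.blocks := by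
  rw [h.hy]; exact Finset.mem_union_right _ (by simp)

lemma old_mem (h : MergeSpec x y B C) {D : Finset ℤ} (hD : D ∈ x.blocks) (h1 : D ≠ B) (h2 : D ≠ C)
    (h3 : D ≠ negF B) (h4 : D ≠ negF C) : D ∈ y.blocks := by
  rw [h.hy]
  exact Finset.mem_union_left _ (Finset.mem_sdiff.2 ⟨hD, by simp [h1, h2, h3, h4]⟩)

lemma le_xy (h : MergeSpec x y B C) : le x y := by
  intro D hD
  by_cases h1 : D = B
  · exact ⟨B ∪ C, h.hMmem, h1 ▸ Finset.subset_union_left⟩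
  by_cases h2 : D = C
  · exact ⟨B ∪ C, h.hMmem, h2 ▸ Finset.subset_union_right⟩
  by_cases h3 : D = negF B
  · refine ⟨negF (B ∪ C), h.hnMmem, h3 ▸ ?_⟩
    rw [negF_union]; exact Finset.subset_union_left
  by_cases h4 : D = negF C
  · refine ⟨negF (B ∪ C), h.hnMmem, h4 ▸ ?_⟩
    rw [negF_union]; exact Finset.subset_union_right
  · exact ⟨D, h.old_mem hD h1 h2 h3 h4, Finset.Subset.refl D⟩

lemma ne_xy (h : MergeSpec x y B C) : x ≠ y := by
  intro hxy
  have hM : B ∪ C ∈ x.blocks := hxy ▸ h.hMmem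
  obtain ⟨b, hb⟩ := x.nonempty_blocks B h.hB
  have : B ∪ C = B := block_eq_of_mem hM h.hB (Finset.mem_union_left _ hb) hb
  obtain ⟨c, hc⟩ := x.nonempty_blocks C h.hC
  have hcB : c ∈ B := this ▸ Finset.mem_union_right _ hc
  exact Finset.disjoint_left.1 h.disjBC hcB hc

lemma lt_xy (h : MergeSpec x y B C) : lt x y := lt_iff'.2 ⟨h.le_xy, h.ne_xy⟩

lemma zero_still (h : MergeSpec x y B C) {Z : Finset ℤ} (hZ : Z ∈ x.blocks) (h0Z : (0:ℤ) ∈ Z) : Z ∈ y.blocks := by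
  refine h.old_mem hZ ?_ ?_ ?_ ?_ <;> rintro rfl
  · exact h.h0B h0Z
  · exact h.h0C h0Z
  · exact zero_not_mem_negF h.h0B h0Z
  · exact zero_not_mem_negF h.h0C h0Z

lemma memLD_still (h : MergeSpec x y B C) {t : ℕ} (hx : memLD t x) : memLD t y := by
  intro k hk1 hk2 hc
  rw [h.hy] at hc
  rcases Finset.mem_union.1 hc with hc | hc
  · exact hx k hk1 hk2 (Finset.mem_sdiff.1 hc).1
  · have h0 : (0:ℤ) ∈ ({k, 0, -k} : Finset ℤ) := by simp
    simp only [Finset.mem_insert, Finset.mem_singleton] at hc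
    rcases hc with hc | hc
    · exact h.h0M (hc ▸ h0)
    · exact zero_not_mem_negF h.h0M (hc ▸ h0)

end MergeSpec
end ChainsBij
namespace ChainsBij

set_option linter.unusedVariables false
set_option autoImplicit false

open SignedPartition (le lt covby)

variable {n : ℕ}

/-- A block of both `x` and `y` is a block of any `w` between them. -/
lemma old_in_w {x w y : SignedPartition n} {D : Finset ℤ} (hDx : D ∈ x.blocks)
    (hDy : D ∈ y.blocks) (hxw : le x w) (hwy : le w y) : D ∈ w.blocks := by
  obtain ⟨W, hW, hDW⟩ := hxw D hDx
  obtain ⟨Y, hY, hWY⟩ := hwy W hW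
  obtain ⟨t, ht⟩ := x.nonempty_blocks D hDx
  have hYD : Y = D := block_eq_of_mem hY hDy (hWY (hDW ht)) ht
  have : W = D := Finset.Subset.antisymm (hYD ▸ hWY) hDW
  exact this ▸ hW

lemma mergeBlocks_comm (x : SignedPartition n) (B C : Finset ℤ) :
    mergeBlocks x C B = mergeBlocks x B C := by
  unfold mergeBlocks
  rw [Finset.union_comm C B]
  ext D
  simp only [Finset.mem_union, Finset.mem_sdiff, Finset.mem_insert, Finset.mem_singleton]
  tauto

lemma MergeSpec.symm {x y : SignedPartition n} {B C : Finset ℤ} (h : MergeSpec x y B C) :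
    MergeSpec x y C B :=
  ⟨h.hC, h.hB, h.h0C, h.h0B, h.hBC.symm, h.hBnC, by rw [h.hy, mergeBlocks_comm]⟩

/-- The `w`-block containing `B` lies inside `B ∪ C`, for `x ≤ w ≤ y`. -/
lemma MergeSpec.wblock {x y : SignedPartition n} {B C : Finset ℤ} (h : MergeSpec x y B C)
    {w : SignedPartition n} (hxw : le x w) (hwy : le w y) :
    ∃ W ∈ w.blocks, B ⊆ W ∧ W ⊆ B ∪ C := by
  obtain ⟨W, hW, hBW⟩ := hxw B h.hB
  obtain ⟨b, hb⟩ := x.nonempty_blocks B h.hB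
  obtain ⟨Y, hY, hWY⟩ := hwy W hW
  have hbY : b ∈ Y := hWY (hBW hb)
  have hYM : Y = B ∪ C := by
    rw [h.hy] at hY
    rcases Finset.mem_union.1 hY with hY' | hY'
    · exfalso
      obtain ⟨hYx, hYS⟩ := Finset.mem_sdiff.1 hY'
      have hYB : Y = B := block_eq_of_mem hYx h.hB hbY hb
      simp only [Finset.mem_insert, Finset.mem_singleton, not_or] at hYS
      exact hYS.1 hYB
    · simp only [Finset.mem_insert, Finset.mem_singleton] at hY'
      rcases hY' with hY' | hY'
      · exact hY'
      · exfalso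
        have hbn : b ∈ negF (B ∪ C) := hY' ▸ hbY
        rw [negF_union] at hbn
        rcases Finset.mem_union.1 hbn with hbn | hbn
        · exact Finset.disjoint_left.1 (x.disjoint_blocks B h.hB (negF B) h.hnBmem
            (Ne.symm (negF_ne_self h.hB h.h0B))) hb hbn
        · exact Finset.disjoint_left.1 (x.disjoint_blocks B h.hB (negF C) h.hnCmem
            h.hBnC) hb hbn
  exact ⟨W, hW, hBW, hYM ▸ hWY⟩

lemma MergeSpec.sandwich {x y : SignedPartition n} {B C : Finset ℤ} (h : MergeSpec x y B C)
    {w : SignedPartition n} (hxw : le x w) (hwy : le w y) : w = x ∨ w = y := by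
  obtain ⟨W, hW, hBW, hWM⟩ := h.wblock hxw hwy
  by_cases hCW : ∃ t, t ∈ C ∧ t ∈ W
  · -- C also inside W, so W = B ∪ C and w = y
    obtain ⟨t, htC, htW⟩ := hCW
    have hCsub : C ⊆ W := sub_of_meet hxw h.hC hW htC htW
    have hWM' : W = B ∪ C := Finset.Subset.antisymm hWM (Finset.union_subset hBW hCsub)
    right
    apply eq_of_blocks_subset
    rw [h.hy]
    intro D hD
    rcases Finset.mem_union.1 hD with hD' | hD'
    · obtain ⟨hDx, hDS⟩ := Finset.mem_sdiff.1 hD'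
      exact old_in_w hDx (by rw [h.hy]; exact Finset.mem_union_left _ hD') hxw hwy
    · simp only [Finset.mem_insert, Finset.mem_singleton] at hD'
      rcases hD' with rfl | rfl
      · exact hWM' ▸ hW
      · have := w.neg_mem W hW
        rw [hWM'] at this
        exact this
  · -- W = B; arguing symmetrically the block of C is C, and w = x
    push_neg at hCW
    have hWB : W = B := by
      apply Finset.Subset.antisymm _ hBW
      intro t htW
      rcases Finset.mem_union.1 (hWM htW) with h' | h'
      · exact h'
      · exact absurd htW (hCW t h')
    obtain ⟨W', hW', hCW', hWM'⟩ := h.symm.wblock hxw hwy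
    have hWC : W' = C := by
      apply Finset.Subset.antisymm _ hCW'
      intro t htW'
      rcases Finset.mem_union.1 (hWM' htW') with h' | h'
      · exact h'
      · -- t ∈ B = W, so W' = W, so C ⊆ W, contradiction
        exfalso
        have htW : t ∈ W := hWB ▸ h'
        have : W' = W := block_eq_of_mem hW' hW htW' htW
        obtain ⟨c, hc⟩ := x.nonempty_blocks C h.hC
        exact hCW c hc (this ▸ hCW' hc)
    left
    apply eq_of_blocks_subset
    intro D hD
    by_cases h1 : D = B
    · exact h1 ▸ hWB ▸ hW
    by_cases h2 : D = C
    · exact h2 ▸ hWC ▸ hW'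
    by_cases h3 : D = negF B
    · have := w.neg_mem W hW; rw [hWB] at this; exact h3 ▸ this
    by_cases h4 : D = negF C
    · have := w.neg_mem W' hW'; rw [hWC] at this; exact h4 ▸ this
    · exact old_in_w hD (h.old_mem hD h1 h2 h3 h4) hxw hwy

end ChainsBij
namespace ChainsBij

set_option linter.unusedVariables false
set_option autoImplicit false

open SignedPartition (le lt covby)

variable {n : ℕ}

namespace AbsorbSpec

variable {x y : SignedPartition n} {Z B : Finset ℤ}

lemma hZB (h : AbsorbSpec x y Z B) : Z ≠ B := fun hh => h.h0B (hh ▸ h.h0Z)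

lemma hnB (h : AbsorbSpec x y Z B) : negF B ∈ x.blocks := negF_mem_blocks h.hB

lemma hZnB (h : AbsorbSpec x y Z B) : Z ≠ negF B :=
  fun hh => zero_not_mem_negF h.h0B (hh ▸ h.h0Z)

lemma hBnB (h : AbsorbSpec x y Z B) : B ≠ negF B := (negF_ne_self h.hB h.h0B).symm

lemma hAmem (h : AbsorbSpec x y Z B) : Z ∪ B ∪ negF B ∈ y.blocks := by
  rw [h.hy]; exact Finset.mem_union_right _ (by simp)

lemma h0A (h : AbsorbSpec x y Z B) : (0:ℤ) ∈ Z ∪ B ∪ negF B := by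
  simp only [Finset.mem_union]; exact Or.inl (Or.inl h.h0Z)

lemma old_mem (h : AbsorbSpec x y Z B) {D : Finset ℤ} (hD : D ∈ x.blocks) (h1 : D ≠ Z)
    (h2 : D ≠ B) (h3 : D ≠ negF B) : D ∈ y.blocks := by
  rw [h.hy]
  exact Finset.mem_union_left _ (Finset.mem_sdiff.2 ⟨hD, by simp [h1, h2, h3]⟩)

lemma le_xy (h : AbsorbSpec x y Z B) : le x y := by
  intro D hD
  by_cases h1 : D = Z
  · exact ⟨_, h.hAmem, h1 ▸ (Finset.subset_union_left.trans Finset.subset_union_left)⟩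
  by_cases h2 : D = B
  · exact ⟨_, h.hAmem, h2 ▸ (Finset.subset_union_right.trans Finset.subset_union_left)⟩
  by_cases h3 : D = negF B
  · exact ⟨_, h.hAmem, h3 ▸ Finset.subset_union_right⟩
  · exact ⟨D, h.old_mem hD h1 h2 h3, Finset.Subset.refl D⟩

lemma ne_xy (h : AbsorbSpec x y Z B) : x ≠ y := by
  intro hxy
  have hA : Z ∪ B ∪ negF B ∈ x.blocks := hxy ▸ h.hAmem
  have hAZ : Z ∪ B ∪ negF B = Z := block_eq_of_mem hA h.hZ h.h0A h.h0Z
  obtain ⟨b, hb⟩ := x.nonempty_blocks B h.hB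
  have hbZ : b ∈ Z := hAZ ▸ (by simp only [Finset.mem_union]; exact Or.inl (Or.inr hb))
  exact Finset.disjoint_left.1
    (x.disjoint_blocks B h.hB Z h.hZ (Ne.symm h.hZB)) hb hbZ

lemma lt_xy (h : AbsorbSpec x y Z B) : lt x y := lt_iff'.2 ⟨h.le_xy, h.ne_xy⟩

lemma signedEdge (h : AbsorbSpec x y Z B) : SignedEdge x y := by
  refine ⟨Z, Z ∪ B ∪ negF B, h.hZ, h.h0Z, h.hAmem, h.h0A, ?_⟩
  refine Finset.ssubset_iff_of_subset (Finset.subset_union_left.trans Finset.subset_union_left)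
    |>.2 ?_
  obtain ⟨b, hb⟩ := x.nonempty_blocks B h.hB
  refine ⟨b, by simp only [Finset.mem_union]; exact Or.inl (Or.inr hb), ?_⟩
  exact fun hbZ => Finset.disjoint_left.1
    (x.disjoint_blocks B h.hB Z h.hZ (Ne.symm h.hZB)) hb hbZ

lemma sandwich (h : AbsorbSpec x y Z B) {w : SignedPartition n}
    (hxw : le x w) (hwy : le w y) : w = x ∨ w = y := by
  obtain ⟨W, hW, hZW⟩ := hxw Z h.hZ
  have h0W : (0:ℤ) ∈ W := hZW h.h0Z
  obtain ⟨Y, hY, hWY⟩ := hwy W hW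
  have h0Y : (0:ℤ) ∈ Y := hWY h0W
  -- Y must be the absorbed block
  have hYA : Y = Z ∪ B ∪ negF B := by
    rw [h.hy] at hY
    rcases Finset.mem_union.1 hY with hY' | hY'
    · exfalso
      obtain ⟨hYx, hYS⟩ := Finset.mem_sdiff.1 hY'
      have : Y = Z := block_eq_of_mem hYx h.hZ h0Y h.h0Z
      simp only [Finset.mem_insert, Finset.mem_singleton, not_or] at hYS
      exact hYS.1 this
    · simpa using hY'
  have hWA : W ⊆ Z ∪ B ∪ negF B := hYA ▸ hWY
  -- W is symmetric under negation
  have hnW : negF W = W := by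
    refine block_eq_of_mem (w.neg_mem W hW) hW ?_ h0W
    exact mem_negF.2 (by simpa using h0W)
  by_cases hBW : ∃ t, t ∈ B ∧ t ∈ W
  · -- B inside W, so W is everything, and w = y
    obtain ⟨t, htB, htW⟩ := hBW
    have hBsub : B ⊆ W := sub_of_meet hxw h.hB hW htB htW
    have hnBsub : negF B ⊆ W := by
      intro a ha
      have : -a ∈ B := mem_negF.1 ha
      have : -a ∈ W := hBsub this
      have : a ∈ negF W := mem_negF.2 (by simpa using this)
      exact hnW ▸ this
    have hWA' : W = Z ∪ B ∪ negF B :=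
      Finset.Subset.antisymm hWA (Finset.union_subset (Finset.union_subset hZW hBsub) hnBsub)
    right
    apply eq_of_blocks_subset
    rw [h.hy]
    intro D hD
    rcases Finset.mem_union.1 hD with hD' | hD'
    · obtain ⟨hDx, _⟩ := Finset.mem_sdiff.1 hD'
      exact old_in_w hDx (by rw [h.hy]; exact Finset.mem_union_left _ hD') hxw hwy
    · have hDA : D = Z ∪ B ∪ negF B := by simpa using hD'
      exact hDA ▸ hWA' ▸ hW
  · -- B disjoint from W, so W = Z, the block of B is B, and w = x
    push_neg at hBW
    have hWnB : ∀ t ∈ W, t ∉ negF B := by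
      intro t htW htnB
      have hmt : -t ∈ B := mem_negF.1 htnB
      have hmtW : -t ∈ W := by
        have : -t ∈ negF W := mem_negF.2 (by simpa using htW)
        exact hnW ▸ this
      exact hBW (-t) hmt hmtW
    have hWZ : W = Z := by
      apply Finset.Subset.antisymm _ hZW
      intro t htW
      rcases Finset.mem_union.1 (hWA htW) with h' | h'
      · rcases Finset.mem_union.1 h' with h'' | h''
        · exact h''
        · exact absurd htW (hBW t h'')
      · exact absurd h' (hWnB t htW)
    -- now the block containing B
    obtain ⟨W', hW', hBW'⟩ := hxw B h.hB
    obtain ⟨b, hb⟩ := x.nonempty_blocks B h.hB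
    obtain ⟨Y', hY', hWY'⟩ := hwy W' hW'
    have hbY' : b ∈ Y' := hWY' (hBW' hb)
    have hY'A : Y' = Z ∪ B ∪ negF B := by
      rw [h.hy] at hY'
      rcases Finset.mem_union.1 hY' with hh | hh
      · exfalso
        obtain ⟨hYx, hYS⟩ := Finset.mem_sdiff.1 hh
        have : Y' = B := block_eq_of_mem hYx h.hB hbY' hb
        simp only [Finset.mem_insert, Finset.mem_singleton, not_or] at hYS
        exact hYS.2.1 this
      · simpa using hh
    have hW'A : W' ⊆ Z ∪ B ∪ negF B := hY'A ▸ hWY'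
    have hW'Z : ∀ t ∈ W', t ∉ Z := by
      intro t htW' htZ
      have : W' = W := block_eq_of_mem hW' hW htW' (hWZ ▸ htZ)
      exact hBW b hb (this ▸ hBW' hb)
    have hW'nB : ∀ t ∈ W', t ∉ negF B := by
      intro t htW' htnB
      have hmt : -t ∈ B := mem_negF.1 htnB
      have ht0 : t ≠ 0 := fun hh => h.h0B (by simpa [hh] using hmt)
      have hmtW' : -t ∈ W' := hBW' hmt
      have h0W' : (0:ℤ) ∈ W' := by
        rcases lt_trichotomy t 0 with hlt | he | hgt
        · exact w.zero_cond W' hW' (-t) (by omega) hmtW' (by simpa using htW')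
        · exact absurd he ht0
        · exact w.zero_cond W' hW' t hgt htW' hmtW'
      have : W' = W := block_eq_of_mem hW' hW h0W' h0W
      exact hW'Z t htW' (hWZ ▸ (this ▸ htW' : t ∈ W))
    have hW'B : W' = B := by
      apply Finset.Subset.antisymm _ hBW'
      intro t htW'
      rcases Finset.mem_union.1 (hW'A htW') with h' | h'
      · rcases Finset.mem_union.1 h' with h'' | h''
        · exact absurd h'' (hW'Z t htW')
        · exact h''
      · exact absurd h' (hW'nB t htW')
    left
    apply eq_of_blocks_subset
    intro D hD
    by_cases h1 : D = Z
    · exact h1 ▸ hWZ ▸ hW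
    by_cases h2 : D = B
    · exact h2 ▸ hW'B ▸ hW'
    by_cases h3 : D = negF B
    · have := w.neg_mem W' hW'; rw [hW'B] at this; exact h3 ▸ this
    · exact old_in_w hD (h.old_mem hD h1 h2 h3) hxw hwy

end AbsorbSpec
end ChainsBij
namespace ChainsBij

set_option linter.unusedVariables false
set_option autoImplicit false

open SignedPartition (le lt covby)

variable {n : ℕ}

/-- Key fact: the merged block `B ∪ C` cannot contain both `i` and `-i`. -/
lemma merge_key {x : SignedPartition n} {B C : Finset ℤ} (hB : B ∈ x.blocks)
    (hC : C ∈ x.blocks) (h0B : (0:ℤ) ∉ B) (h0C : (0:ℤ) ∉ C) (hBC : B ≠ C)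
    (hCnB : C ≠ negF B) : ∀ i : ℤ, i ∈ B ∪ C → -i ∈ B ∪ C → False := by
  have hBnC : B ≠ negF C := fun hh => hCnB (negF_inj (by rw [← hh, negF_negF]))
  intro i hi hni
  have hi0 : i ≠ 0 := by
    rintro rfl
    rcases Finset.mem_union.1 hi with h' | h' <;> [exact h0B h'; exact h0C h']
  have hzc : ∀ (D : Finset ℤ), D ∈ x.blocks → (0:ℤ) ∉ D → i ∈ D → -i ∈ D → False := by
    intro D hD h0D hiD hniD
    rcases lt_trichotomy i 0 with hlt | he | hgt
    · exact h0D (x.zero_cond D hD (-i) (by omega) hniD (by simpa using hiD))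
    · exact hi0 he
    · exact h0D (x.zero_cond D hD i hgt hiD hniD)
  rcases Finset.mem_union.1 hi with hiB | hiC <;> rcases Finset.mem_union.1 hni with hniB | hniC
  · exact hzc B hB h0B hiB hniB
  · -- i ∈ B, -i ∈ C: i ∈ negF C
    have : i ∈ negF C := mem_negF.2 (by simpa using hniC)
    exact Finset.disjoint_left.1
      (x.disjoint_blocks B hB (negF C) (negF_mem_blocks hC) hBnC) hiB this
  · have : i ∈ negF B := mem_negF.2 (by simpa using hniB)
    exact Finset.disjoint_left.1
      (x.disjoint_blocks C hC (negF B) (negF_mem_blocks hB) hCnB) hiC this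
  · exact hzc C hC h0C hiC hniC

def mergeP (x : SignedPartition n) (B C : Finset ℤ) (hB : B ∈ x.blocks) (hC : C ∈ x.blocks)
    (h0B : (0:ℤ) ∉ B) (h0C : (0:ℤ) ∉ C) (hBC : B ≠ C) (hCnB : C ≠ negF B) :
    SignedPartition n := by
  have hBnC : B ≠ negF C := fun hh => hCnB (negF_inj (by rw [← hh, negF_negF]))
  have key := merge_key hB hC h0B h0C hBC hCnB
  have hold : ∀ D ∈ mergeBlocks x B C,
      (D ∈ x.blocks ∧ D ≠ B ∧ D ≠ C ∧ D ≠ negF B ∧ D ≠ negF C) ∨ D = B ∪ C ∨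
        D = negF (B ∪ C) := by
    intro D hD
    rcases Finset.mem_union.1 hD with hD' | hD'
    · obtain ⟨hDx, hDS⟩ := Finset.mem_sdiff.1 hD'
      simp only [Finset.mem_insert, Finset.mem_singleton, not_or] at hDS
      exact Or.inl ⟨hDx, hDS.1, hDS.2.1, hDS.2.2.1, hDS.2.2.2⟩
    · simp only [Finset.mem_insert, Finset.mem_singleton] at hD'
      exact Or.inr hD'
  have holdd : ∀ D : Finset ℤ, D ∈ x.blocks → D ≠ B → D ≠ C → D ≠ negF B → D ≠ negF C →
      Disjoint D (B ∪ C) ∧ Disjoint D (negF (B ∪ C)) := by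
    intro D hD h1 h2 h3 h4
    constructor
    · rw [Finset.disjoint_union_right]
      exact ⟨x.disjoint_blocks D hD B hB h1, x.disjoint_blocks D hD C hC h2⟩
    · rw [negF_union, Finset.disjoint_union_right]
      exact ⟨x.disjoint_blocks D hD (negF B) (negF_mem_blocks hB) h3,
        x.disjoint_blocks D hD (negF C) (negF_mem_blocks hC) h4⟩
  have hMnM : Disjoint (B ∪ C) (negF (B ∪ C)) := by
    rw [Finset.disjoint_left]
    intro a ha hna
    exact key a ha (mem_negF.1 hna)
  refine ⟨mergeBlocks x B C, ?_, ?_, ?_, ?_, ?_, ?_⟩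
  · intro D hD
    rcases hold D hD with ⟨hDx, _⟩ | hD' | hD'
    · exact x.nonempty_blocks D hDx
    · obtain ⟨b, hb⟩ := x.nonempty_blocks B hB
      exact ⟨b, hD' ▸ Finset.mem_union_left _ hb⟩
    · obtain ⟨b, hb⟩ := x.nonempty_blocks B hB
      exact ⟨-b, hD' ▸ mem_negF.2 (by simpa using Finset.mem_union_left C hb)⟩
  · intro D hD
    rcases hold D hD with ⟨hDx, _⟩ | hD' | hD'
    · exact x.subset_ground D hDx
    · exact hD' ▸ Finset.union_subset (x.subset_ground B hB) (x.subset_ground C hC)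
    · exact hD' ▸ negF_ground
        (Finset.union_subset (x.subset_ground B hB) (x.subset_ground C hC))
  · intro D hD E hE hne
    rcases hold D hD with ⟨hDx, hD1, hD2, hD3, hD4⟩ | hD' | hD' <;>
      rcases hold E hE with ⟨hEx, hE1, hE2, hE3, hE4⟩ | hE' | hE'
    · exact x.disjoint_blocks D hDx E hEx hne
    · exact hE' ▸ (holdd D hDx hD1 hD2 hD3 hD4).1
    · exact hE' ▸ (holdd D hDx hD1 hD2 hD3 hD4).2
    · exact hD' ▸ ((holdd E hEx hE1 hE2 hE3 hE4).1).symm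
    · exact absurd (hD'.trans hE'.symm) hne
    · exact hD' ▸ hE' ▸ hMnM
    · exact hD' ▸ ((holdd E hEx hE1 hE2 hE3 hE4).2).symm
    · exact hD' ▸ hE' ▸ hMnM.symm
    · exact absurd (hD'.trans hE'.symm) hne
  · intro t ht
    obtain ⟨D, hD, htD⟩ := x.covers t ht
    by_cases h1 : D = B
    · exact ⟨B ∪ C, Finset.mem_union_right _ (by simp), Finset.mem_union_left _ (h1 ▸ htD)⟩
    by_cases h2 : D = C
    · exact ⟨B ∪ C, Finset.mem_union_right _ (by simp), Finset.mem_union_right _ (h2 ▸ htD)⟩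
    by_cases h3 : D = negF B
    · refine ⟨negF (B ∪ C), Finset.mem_union_right _ (by simp), ?_⟩
      rw [negF_union]
      exact Finset.mem_union_left _ (h3 ▸ htD)
    by_cases h4 : D = negF C
    · refine ⟨negF (B ∪ C), Finset.mem_union_right _ (by simp), ?_⟩
      rw [negF_union]
      exact Finset.mem_union_right _ (h4 ▸ htD)
    · exact ⟨D, Finset.mem_union_left _ (Finset.mem_sdiff.2 ⟨hD, by simp [h1, h2, h3, h4]⟩), htD⟩
  · intro D hD
    rcases hold D hD with ⟨hDx, hD1, hD2, hD3, hD4⟩ | hD' | hD'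
    · show negF D ∈ _
      refine Finset.mem_union_left _ (Finset.mem_sdiff.2 ⟨negF_mem_blocks hDx, ?_⟩)
      simp only [Finset.mem_insert, Finset.mem_singleton, not_or]
      refine ⟨?_, ?_, ?_, ?_⟩
      · rintro rfl; exact hD3 (by rw [negF_negF])
      · rintro rfl; exact hD4 (by rw [negF_negF])
      · exact fun hh => hD1 (negF_inj hh)
      · exact fun hh => hD2 (negF_inj hh)
    · show negF D ∈ _
      exact Finset.mem_union_right _ (by simp [hD'])
    · show negF D ∈ _
      rw [hD', negF_negF]
      exact Finset.mem_union_right _ (by simp)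
  · intro D hD i hi hiD hniD
    rcases hold D hD with ⟨hDx, _⟩ | hD' | hD'
    · exact x.zero_cond D hDx i hi hiD hniD
    · exact absurd (key i (hD' ▸ hiD) (hD' ▸ hniD)) (fun f => f)
    · subst hD'
      exact absurd (key i (by simpa using mem_negF.1 hniD) (mem_negF.1 hiD)) (fun f => f)

lemma mergeP_spec (x : SignedPartition n) (B C : Finset ℤ) (hB : B ∈ x.blocks)
    (hC : C ∈ x.blocks) (h0B : (0:ℤ) ∉ B) (h0C : (0:ℤ) ∉ C) (hBC : B ≠ C)
    (hCnB : C ≠ negF B) : MergeSpec x (mergeP x B C hB hC h0B h0C hBC hCnB) B C :=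
  ⟨hB, hC, h0B, h0C, hBC, hCnB, rfl⟩

end ChainsBij
namespace ChainsBij

set_option linter.unusedVariables false
set_option autoImplicit false

open SignedPartition (le lt covby)

variable {n : ℕ}

lemma negF_mono {B C : Finset ℤ} (h : B ⊆ C) : negF B ⊆ negF C := by
  intro a ha; exact mem_negF.2 (h (mem_negF.1 ha))

lemma zero_in_w {x : SignedPartition n} {W : Finset ℤ} (hW : W ∈ x.blocks) {i : ℤ}
    (hi0 : i ≠ 0) (hi : i ∈ W) (hni : -i ∈ W) : (0:ℤ) ∈ W := by
  rcases lt_trichotomy i 0 with hlt | he | hgt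
  · exact x.zero_cond W hW (-i) (by omega) hni (by simpa using hi)
  · exact absurd he hi0
  · exact x.zero_cond W hW i hgt hi hni

/-- Classification of covers in `L(D_{n,t})`: each is a merge or an absorption. -/
lemma classify {t : ℕ} {x y : SignedPartition n} (h : covLD t x y) :
    (∃ B C, MergeSpec x y B C) ∨ (∃ Z B, AbsorbSpec x y Z B) := by
  obtain ⟨hmx, hmy, hlt, hmin⟩ := h
  have hle : le x y := hlt.1
  have hne : x ≠ y := (lt_iff'.1 hlt).2
  obtain ⟨Zx, hZx, h0Zx⟩ := exists_zeroBlock x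
  obtain ⟨Zy, hZy, h0Zy⟩ := exists_zeroBlock y
  have hZxy : Zx ⊆ Zy := zero_mono hle hZx h0Zx hZy h0Zy
  have hnZy : negF Zy = Zy := negF_zeroBlock hZy h0Zy
  -- a merge candidate below y forces y to be that merge
  have hmain : ∀ (B C : Finset ℤ) (hB : B ∈ x.blocks) (hC : C ∈ x.blocks)
      (h0B : (0:ℤ) ∉ B) (h0C : (0:ℤ) ∉ C) (hBC : B ≠ C) (hCnB : C ≠ negF B),
      le (mergeP x B C hB hC h0B h0C hBC hCnB) y →
      y = mergeP x B C hB hC h0B h0C hBC hCnB := by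
    intro B C hB hC h0B h0C hBC hCnB hzy
    have hspec := mergeP_spec x B C hB hC h0B h0C hBC hCnB
    by_contra hney
    exact hmin _ (hspec.memLD_still hmx) hspec.lt_xy (lt_iff'.2 ⟨hzy, fun hh => hney hh.symm⟩)
  -- helper to construct `le (mergeP ...) y` from a common target block
  have hlem : ∀ (B C : Finset ℤ) (hB : B ∈ x.blocks) (hC : C ∈ x.blocks)
      (h0B : (0:ℤ) ∉ B) (h0C : (0:ℤ) ∉ C) (hBC : B ≠ C) (hCnB : C ≠ negF B)
      (W : Finset ℤ), W ∈ y.blocks → B ⊆ W → C ⊆ W →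
      le (mergeP x B C hB hC h0B h0C hBC hCnB) y := by
    intro B C hB hC h0B h0C hBC hCnB W hW hBW hCW
    intro D hD
    rcases Finset.mem_union.1 hD with hD' | hD'
    · exact hle D (Finset.mem_sdiff.1 hD').1
    · simp only [Finset.mem_insert, Finset.mem_singleton] at hD'
      rcases hD' with rfl | rfl
      · exact ⟨W, hW, Finset.union_subset hBW hCW⟩
      · exact ⟨negF W, negF_mem_blocks hW, negF_mono (Finset.union_subset hBW hCW)⟩
  by_cases hP1 : ∃ B C : Finset ℤ, B ∈ x.blocks ∧ C ∈ x.blocks ∧ (0:ℤ) ∉ B ∧ (0:ℤ) ∉ C ∧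
      B ≠ C ∧ ∃ W ∈ y.blocks, (0:ℤ) ∉ W ∧ B ⊆ W ∧ C ⊆ W
  · -- a genuine merge
    obtain ⟨B, C, hB, hC, h0B, h0C, hBC, W, hW, h0W, hBW, hCW⟩ := hP1
    have hCnB : C ≠ negF B := by
      rintro rfl
      obtain ⟨b, hb⟩ := x.nonempty_blocks B hB
      have hb0 : b ≠ 0 := fun hh => h0B (hh ▸ hb)
      exact h0W (zero_in_w hW hb0 (hBW hb) (hCW (mem_negF.2 (by simpa using hb))))
    have := hmain B C hB hC h0B h0C hBC hCnB (hlem B C hB hC h0B h0C hBC hCnB W hW hBW hCW)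
    exact Or.inl ⟨B, C, hB, hC, h0B, h0C, hBC, hCnB, by rw [this]; rfl⟩
  · -- no nonzero merge; nonzero blocks of y are blocks of x
    have hny : ∀ W ∈ y.blocks, (0:ℤ) ∉ W → W ∈ x.blocks := by
      intro W hW h0W
      obtain ⟨t0, ht0⟩ := y.nonempty_blocks W hW
      obtain ⟨D, hD, ht0D, hDW⟩ := cell hle hW ht0
      have hWD : W ⊆ D := by
        intro t' ht'
        obtain ⟨D', hD', ht'D', hD'W⟩ := cell hle hW ht'
        by_cases hDD' : D = D'
        · exact hDD' ▸ ht'D'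
        · exfalso
          exact hP1 ⟨D, D', hD, hD', fun hc => h0W (hDW hc), fun hc => h0W (hD'W hc),
            hDD', W, hW, h0W, hDW, hD'W⟩
      exact (Finset.Subset.antisymm hWD hDW) ▸ hD
    -- no two distinct nonzero classes can sit inside Zy
    have hone : ∀ D D' : Finset ℤ, D ∈ x.blocks → D' ∈ x.blocks → (0:ℤ) ∉ D → (0:ℤ) ∉ D' →
        D ⊆ Zy → D' ⊆ Zy → D ≠ D' → D' ≠ negF D → False := by
      intro D D' hD hD' h0D h0D' hDZ hD'Z hDD' hD'nD
      have hzy := hlem D D' hD hD' h0D h0D' hDD' hD'nD Zy hZy hDZ hD'Z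
      have heq := hmain D D' hD hD' h0D h0D' hDD' hD'nD hzy
      have hM : D ∪ D' ∈ y.blocks := by rw [heq]; exact Finset.mem_union_right _ (by simp)
      obtain ⟨d, hd⟩ := x.nonempty_blocks D hD
      have : D ∪ D' = Zy :=
        block_eq_of_mem hM hZy (Finset.mem_union_left _ hd) (hDZ hd)
      have h0M : (0:ℤ) ∈ D ∪ D' := this ▸ h0Zy
      rcases Finset.mem_union.1 h0M with hc | hc <;> [exact h0D hc; exact h0D' hc]
    by_cases hP2 : ∃ B : Finset ℤ, B ∈ x.blocks ∧ (0:ℤ) ∉ B ∧ B ⊆ Zy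
    · -- absorption
      obtain ⟨B, hB, h0B, hBZ⟩ := hP2
      have hnBZ : negF B ⊆ Zy := hnZy ▸ negF_mono hBZ
      have hZyA : Zy = Zx ∪ B ∪ negF B := by
        apply Finset.Subset.antisymm
        · intro t' ht'
          obtain ⟨D, hD, ht'D, hDZ⟩ := cell hle hZy ht'
          by_cases h0D : (0:ℤ) ∈ D
          · have : D = Zx := block_eq_of_mem hD hZx h0D h0Zx
            exact Finset.mem_union_left _ (Finset.mem_union_left _ (this ▸ ht'D))
          · by_cases hDB : D = B
            · exact Finset.mem_union_left _ (Finset.mem_union_right _ (hDB ▸ ht'D))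
            by_cases hDnB : D = negF B
            · exact Finset.mem_union_right _ (hDnB ▸ ht'D)
            · exact absurd (hone B D hB hD h0B h0D hBZ hDZ (Ne.symm hDB) hDnB) (fun f => f)
        · exact Finset.union_subset (Finset.union_subset hZxy hBZ) hnBZ
      refine Or.inr ⟨Zx, B, hZx, h0Zx, hB, h0B, ?_⟩
      -- blocks equality
      apply Finset.Subset.antisymm
      · intro W hW
        by_cases h0W : (0:ℤ) ∈ W
        · have : W = Zy := block_eq_of_mem hW hZy h0W h0Zy
          exact Finset.mem_union_right _ (by simp [this, hZyA])
        · have hWx : W ∈ x.blocks := hny W hW h0W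
          refine Finset.mem_union_left _ (Finset.mem_sdiff.2 ⟨hWx, ?_⟩)
          have hdisj : Disjoint W Zy := by
            refine y.disjoint_blocks W hW Zy hZy (fun hh => h0W (hh ▸ h0Zy))
          simp only [Finset.mem_insert, Finset.mem_singleton, not_or]
          obtain ⟨t0, ht0⟩ := y.nonempty_blocks W hW
          refine ⟨fun hh => h0W (hh ▸ h0Zx), ?_, ?_⟩
          · rintro rfl
            exact Finset.disjoint_left.1 hdisj ht0 (hBZ ht0)
          · rintro rfl
            exact Finset.disjoint_left.1 hdisj ht0 (hnBZ ht0)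
      · intro W hW
        rcases Finset.mem_union.1 hW with hW' | hW'
        · obtain ⟨hWx, hWS⟩ := Finset.mem_sdiff.1 hW'
          simp only [Finset.mem_insert, Finset.mem_singleton, not_or] at hWS
          obtain ⟨hW1, hW2, hW3⟩ := hWS
          -- W is an old block, find its y-block
          obtain ⟨Y, hY, hWY⟩ := hle W hWx
          obtain ⟨t0, ht0⟩ := x.nonempty_blocks W hWx
          by_cases h0Y : (0:ℤ) ∈ Y
          · exfalso
            have hYZy : Y = Zy := block_eq_of_mem hY hZy h0Y h0Zy
            have hWZy : W ⊆ Zy := hYZy ▸ hWY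
            by_cases h0W : (0:ℤ) ∈ W
            · exact hW1 (block_eq_of_mem hWx hZx h0W h0Zx)
            · exact hone B W hB hWx h0B h0W hBZ hWZy (fun hh => hW2 hh.symm) hW3
          · have hYx : Y ∈ x.blocks := hny Y hY h0Y
            have : W = Y := block_eq_of_mem hWx hYx ht0 (hWY ht0)
            exact this ▸ hY
        · have : W = Zx ∪ B ∪ negF B := by simpa using hW'
          exact this ▸ hZyA ▸ hZy
    · -- no change at all: contradiction with x ≠ y
      exfalso
      have hZyZx : Zy = Zx := by
        apply Finset.Subset.antisymm _ hZxy
        intro t' ht'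
        obtain ⟨D, hD, ht'D, hDZ⟩ := cell hle hZy ht'
        by_cases h0D : (0:ℤ) ∈ D
        · exact (block_eq_of_mem hD hZx h0D h0Zx) ▸ ht'D
        · exact absurd ⟨D, hD, h0D, hDZ⟩ hP2
      have : y.blocks ⊆ x.blocks := by
        intro W hW
        by_cases h0W : (0:ℤ) ∈ W
        · have : W = Zy := block_eq_of_mem hW hZy h0W h0Zy
          exact this ▸ hZyZx ▸ hZx
        · exact hny W hW h0W
      exact hne (eq_of_blocks_subset this)
  
end ChainsBij
namespace ChainsBij

set_option linter.unusedVariables false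
set_option autoImplicit false

open SignedPartition (le lt covby)

variable {n : ℕ}

lemma negF_image (R : Finset ℤ) : R.image (fun t => -t) = negF R := rfl

lemma union_not_block {x : SignedPartition n} {R S : Finset ℤ} (hR : R ∈ x.blocks)
    (hS : S ∈ x.blocks) (hne : R ≠ S) : R ∪ S ∉ x.blocks := by
  intro hc
  obtain ⟨r, hr⟩ := x.nonempty_blocks R hR
  have : R ∪ S = R := block_eq_of_mem hc hR (Finset.mem_union_left _ hr) hr
  obtain ⟨t, ht⟩ := x.nonempty_blocks S hS
  have htR : t ∈ R := this ▸ Finset.mem_union_right _ ht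
  exact Finset.disjoint_left.1 (x.disjoint_blocks R hR S hS hne) htR ht

lemma block_in_union {x : SignedPartition n} {R B C : Finset ℤ} (hR : R ∈ x.blocks)
    (hB : B ∈ x.blocks) (hC : C ∈ x.blocks) (hsub : R ⊆ B ∪ C) : R = B ∨ R = C := by
  obtain ⟨r, hr⟩ := x.nonempty_blocks R hR
  rcases Finset.mem_union.1 (hsub hr) with h' | h'
  · exact Or.inl (block_eq_of_mem hR hB hr h')
  · exact Or.inr (block_eq_of_mem hR hC hr h')

lemma normRep_not_both {x : SignedPartition n} {B : Finset ℤ} (hB : B ∈ x.blocks)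
    {i j : ℕ} (hi : NormRep B i) (hj : NormRep (negF B) j) : False := by
  obtain ⟨h0B, hiB, hibd⟩ := hi
  obtain ⟨h0nB, hjB, hjbd⟩ := hj
  have hjB' : -(j:ℤ) ∈ B := mem_negF.1 hjB
  have h1 : i ≤ j := by have := hibd _ hjB'; simpa using this
  have h2 : j ≤ i := by
    have : -(i:ℤ) ∈ negF B := mem_negF.2 (by simpa using hiB)
    have := hjbd _ this; simpa using this
  have hij : i = j := le_antisymm h1 h2
  subst hij
  have hi0 : (i:ℤ) ≠ 0 := fun hh => h0B (hh ▸ hiB)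
  exact h0B (zero_in_w hB hi0 hiB hjB')

lemma normRep_pos {B : Finset ℤ} {i : ℕ} (h : NormRep B i) : 1 ≤ i := by
  rcases Nat.eq_zero_or_pos i with h0 | h1
  · exact absurd (h0 ▸ h.2.1) (by simpa [h0] using h.1)
  · exact h1

/-- Choice of the class representative for a non-zero block. -/
lemma exists_rep {x : SignedPartition n} {B : Finset ℤ} (hB : B ∈ x.blocks)
    (h0B : (0:ℤ) ∉ B) :
    ∃ i : ℕ, 1 ≤ i ∧ (∀ b ∈ B, i ≤ b.natAbs) ∧ ((i:ℤ) ∈ B ∨ -(i:ℤ) ∈ B) := by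
  have hne : (B.image Int.natAbs).Nonempty := (x.nonempty_blocks B hB).image _
  set m := (B.image Int.natAbs).min' hne with hm
  have hmmem : m ∈ B.image Int.natAbs := Finset.min'_mem _ hne
  obtain ⟨b, hb, hbm⟩ := Finset.mem_image.1 hmmem
  have hbd : ∀ c ∈ B, m ≤ c.natAbs := fun c hc =>
    Finset.min'_le _ _ (Finset.mem_image_of_mem _ hc)
  have hb0 : b ≠ 0 := fun hh => h0B (hh ▸ hb)
  refine ⟨m, ?_, hbd, ?_⟩
  · omega
  · rcases Int.natAbs_eq b with he | he
    · exact Or.inl (by rw [← hbm, ← he]; exact hb)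
    · exact Or.inr (by rw [← hbm, ← he]; exact hb)

/-- A normalized representative of `B` or `negF B` is determined by the class data. -/
lemma rep_resolve {x : SignedPartition n} {B : Finset ℤ} (hB : B ∈ x.blocks)
    (h0B : (0:ℤ) ∉ B) {iB : ℕ} (hbd : ∀ b ∈ B, iB ≤ b.natAbs)
    (hside : ((iB:ℤ) ∈ B ∨ -(iB:ℤ) ∈ B))
    {R : Finset ℤ} {i : ℕ} (hcase : R = B ∨ R = negF B) (hN : NormRep R i) :
    i = iB ∧ ((iB:ℤ) ∈ B ↔ R = B) := by
  obtain ⟨h0R, hiR, hibd⟩ := hN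
  rcases hcase with rfl | rfl
  · have h1 : iB ≤ i := by have := hbd _ hiR; simpa using this
    have h2 : i ≤ iB := by
      rcases hside with hh | hh
      · have := hibd _ hh; simpa using this
      · have := hibd _ hh; simpa using this
    have hii : i = iB := le_antisymm h2 h1
    exact ⟨hii, by simp [hii ▸ hiR]⟩
  · have hmiB : -(i:ℤ) ∈ B := mem_negF.1 hiR
    have h1 : iB ≤ i := by have := hbd _ hmiB; simpa using this
    have h2 : i ≤ iB := by
      rcases hside with hh | hh
      · have : -(iB:ℤ) ∈ negF B := mem_negF.2 (by simpa using hh)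
        have := hibd _ this; simpa using this
      · have : (iB:ℤ) ∈ negF B := mem_negF.2 (by simpa using hh)
        have := hibd _ this; simpa using this
    have hii : i = iB := le_antisymm h2 h1
    refine ⟨hii, ?_⟩
    constructor
    · intro hmem
      exfalso
      have hiBne : (iB:ℤ) ≠ 0 := by
        intro hh
        exact h0B (hh ▸ hmem)
      exact h0B (zero_in_w hB hiBne hmem (hii ▸ hmiB))
    · intro hh
      exact absurd hh (negF_ne_self hB h0B)

end ChainsBij
namespace ChainsBij

set_option linter.unusedVariables false
set_option autoImplicit false

open SignedPartition (le lt covby)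

variable {n : ℕ}

lemma AbsorbSpec.label {x y : SignedPartition n} {Z B : Finset ℤ} (h : AbsorbSpec x y Z B) :
    ∀ l, ELlabel x y l ↔ l = (1, 1) := by
  intro l
  constructor
  · rintro (⟨_, rfl⟩ | ⟨R, R', hR, hR', hRR', i, j, hNi, hNj, hcase⟩)
    · rfl
    · exfalso
      -- the merged set is a non-zero block of y, hence an old block: contradiction
      have hkey : ∀ S : Finset ℤ, S ∈ x.blocks → R ≠ S → (0:ℤ) ∉ S →
          R ∪ S ∈ y.blocks → False := by
        intro S hS hRS h0S hmem
        rw [h.hy] at hmem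
        rcases Finset.mem_union.1 hmem with hm | hm
        · exact union_not_block hR hS hRS (Finset.mem_sdiff.1 hm).1
        · have : R ∪ S = Z ∪ B ∪ negF B := by simpa using hm
          have h0 : (0:ℤ) ∈ R ∪ S := this ▸ h.h0A
          rcases Finset.mem_union.1 h0 with hc | hc
          · exact hNi.1 hc
          · exact h0S hc
      rcases hcase with ⟨hmem, _⟩ | ⟨hmem, _⟩
      · exact hkey R' hR' hRR' hNj.1 hmem
      · rw [negF_image] at hmem
        refine hkey (negF R') (negF_mem_blocks hR') ?_ (zero_not_mem_negF hNj.1) hmem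
        intro hh
        exact normRep_not_both hR' hNj (hh ▸ hNi)
  · rintro rfl
    exact Or.inl ⟨h.signedEdge, rfl⟩

/-- Resolution of which blocks can merge into a block of `y` for a merge cover. -/
lemma MergeSpec.resolve {x y : SignedPartition n} {B C : Finset ℤ} (h : MergeSpec x y B C)
    {R S : Finset ℤ} (hR : R ∈ x.blocks) (hS : S ∈ x.blocks) (hRS : R ≠ S)
    (hmem : R ∪ S ∈ y.blocks) :
    (R = B ∧ S = C) ∨ (R = C ∧ S = B) ∨
    (R = negF B ∧ S = negF C) ∨ (R = negF C ∧ S = negF B) := by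
  have hEM : R ∪ S = B ∪ C ∨ R ∪ S = negF (B ∪ C) := by
    rw [h.hy] at hmem
    rcases Finset.mem_union.1 hmem with hm | hm
    · exact absurd (Finset.mem_sdiff.1 hm).1 (union_not_block hR hS hRS)
    · simpa using hm
  rcases hEM with hE | hE
  · have hRsub : R ⊆ B ∪ C := hE ▸ Finset.subset_union_left
    have hSsub : S ⊆ B ∪ C := hE ▸ Finset.subset_union_right
    rcases block_in_union hR h.hB h.hC hRsub with rfl | rfl
    · rcases block_in_union hS h.hB h.hC hSsub with rfl | rfl
      · exact absurd rfl hRS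
      · exact Or.inl ⟨rfl, rfl⟩
    · rcases block_in_union hS h.hB h.hC hSsub with rfl | rfl
      · exact Or.inr (Or.inl ⟨rfl, rfl⟩)
      · exact absurd rfl hRS
  · rw [negF_union] at hE
    have hRsub : R ⊆ negF B ∪ negF C := hE ▸ Finset.subset_union_left
    have hSsub : S ⊆ negF B ∪ negF C := hE ▸ Finset.subset_union_right
    rcases block_in_union hR h.hnBmem h.hnCmem hRsub with rfl | rfl
    · rcases block_in_union hS h.hnBmem h.hnCmem hSsub with rfl | rfl
      · exact absurd rfl hRS
      · exact Or.inr (Or.inr (Or.inl ⟨rfl, rfl⟩))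
    · rcases block_in_union hS h.hnBmem h.hnCmem hSsub with rfl | rfl
      · exact Or.inr (Or.inr (Or.inr ⟨rfl, rfl⟩))
      · exact absurd rfl hRS

lemma MergeSpec.label {x y : SignedPartition n} {B C : Finset ℤ} (h : MergeSpec x y B C)
    {i j : ℕ} (hbi : ∀ b ∈ B, i ≤ b.natAbs) (hsi : ((i:ℤ) ∈ B ∨ -(i:ℤ) ∈ B))
    (hbj : ∀ b ∈ C, j ≤ b.natAbs) (hsj : ((j:ℤ) ∈ C ∨ -(j:ℤ) ∈ C)) :
    ∀ l, ELlabel x y l ↔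
      l = (if ((i:ℤ) ∈ B ↔ (j:ℤ) ∈ C) then ((0:ℕ), max i j) else (2, min i j)) := by
  have hzx := exists_zeroBlock x
  obtain ⟨Zx, hZx, h0Zx⟩ := hzx
  intro l
  constructor
  · rintro (⟨⟨P, Q, hP, h0P, hQ, h0Q, hPQ⟩, rfl⟩ | ⟨R, R', hR, hR', hRR', a, b, hNa, hNb, hcase⟩)
    · -- no signed edge for a merge
      exfalso
      have hQx : Q ∈ x.blocks := by
        rw [h.hy] at hQ
        rcases Finset.mem_union.1 hQ with hm | hm
        · exact (Finset.mem_sdiff.1 hm).1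
        · exfalso
          simp only [Finset.mem_insert, Finset.mem_singleton] at hm
          rcases hm with rfl | rfl
          · exact h.h0M h0Q
          · exact zero_not_mem_negF h.h0M h0Q
      exact hPQ.ne (block_eq_of_mem hP hQx h0P h0Q)
    · rcases hcase with ⟨hmem, rfl⟩ | ⟨hmem, rfl⟩
      · -- coherent
        rcases h.resolve hR hR' hRR' hmem with ⟨rfl, rfl⟩ | ⟨rfl, rfl⟩ | ⟨rfl, rfl⟩ | ⟨rfl, rfl⟩
        · obtain ⟨hai, hsideB⟩ := rep_resolve h.hB h.h0B hbi hsi (Or.inl rfl) hNa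
          obtain ⟨hbj', hsideC⟩ := rep_resolve h.hC h.h0C hbj hsj (Or.inl rfl) hNb
          rw [if_pos (by simp [hsideB, hsideC])]
          simp [hai, hbj']
        · obtain ⟨hai, hsideC⟩ := rep_resolve h.hC h.h0C hbj hsj (Or.inl rfl) hNa
          obtain ⟨hbj', hsideB⟩ := rep_resolve h.hB h.h0B hbi hsi (Or.inl rfl) hNb
          rw [if_pos (by simp [hsideB, hsideC])]
          simp [hai, hbj', Nat.max_comm]
        · obtain ⟨hai, hsideB⟩ := rep_resolve h.hB h.h0B hbi hsi (Or.inr rfl) hNa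
          obtain ⟨hbj', hsideC⟩ := rep_resolve h.hC h.h0C hbj hsj (Or.inr rfl) hNb
          rw [if_pos (by
            constructor
            · intro hc; exact absurd (hsideB.1 hc) (negF_ne_self h.hB h.h0B)
            · intro hc; exact absurd (hsideC.1 hc) (negF_ne_self h.hC h.h0C))]
          simp [hai, hbj']
        · obtain ⟨hai, hsideC⟩ := rep_resolve h.hC h.h0C hbj hsj (Or.inr rfl) hNa
          obtain ⟨hbj', hsideB⟩ := rep_resolve h.hB h.h0B hbi hsi (Or.inr rfl) hNb
          rw [if_pos (by
            constructor
            · intro hc; exact absurd (hsideB.1 hc) (negF_ne_self h.hB h.h0B)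
            · intro hc; exact absurd (hsideC.1 hc) (negF_ne_self h.hC h.h0C))]
          simp [hai, hbj', Nat.max_comm]
      · -- non-coherent
        rw [negF_image] at hmem
        have hRnR' : R ≠ negF R' := fun hh => normRep_not_both hR' hNb (hh ▸ hNa)
        rcases h.resolve hR (negF_mem_blocks hR') hRnR' hmem with
          ⟨rfl, hS⟩ | ⟨rfl, hS⟩ | ⟨rfl, hS⟩ | ⟨rfl, hS⟩
        · -- R = B, negF R' = C, so R' = negF C
          have hR'eq : R' = negF C := by rw [← negF_negF R', hS]
          obtain ⟨hai, hsideB⟩ := rep_resolve h.hB h.h0B hbi hsi (Or.inl rfl) hNa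
          obtain ⟨hbj', hsideC⟩ := rep_resolve h.hC h.h0C hbj hsj (Or.inr hR'eq) hNb
          rw [if_neg (by
            intro hc
            exact absurd (hR'eq ▸ (hsideC.1 (hc.1 (hsideB.2 rfl)))) (negF_ne_self h.hC h.h0C))]
          simp [hai, hbj']
        · have hR'eq : R' = negF B := by rw [← negF_negF R', hS]
          obtain ⟨hai, hsideC⟩ := rep_resolve h.hC h.h0C hbj hsj (Or.inl rfl) hNa
          obtain ⟨hbj', hsideB⟩ := rep_resolve h.hB h.h0B hbi hsi (Or.inr hR'eq) hNb
          rw [if_neg (by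
            intro hc
            exact absurd (hR'eq ▸ (hsideB.1 (hc.2 (hsideC.2 rfl)))) (negF_ne_self h.hB h.h0B))]
          simp [hai, hbj', Nat.min_comm]
        · -- R = negF B, negF R' = negF C, so R' = C
          have hR'eq : R' = C := negF_inj hS
          obtain ⟨hai, hsideB⟩ := rep_resolve h.hB h.h0B hbi hsi (Or.inr rfl) hNa
          obtain ⟨hbj', hsideC⟩ := rep_resolve h.hC h.h0C hbj hsj (Or.inl hR'eq) hNb
          rw [if_neg (by
            intro hc
            exact absurd (hsideB.1 (hc.2 (hsideC.2 hR'eq))) (negF_ne_self h.hB h.h0B))]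
          simp [hai, hbj']
        · have hR'eq : R' = B := negF_inj hS
          obtain ⟨hai, hsideC⟩ := rep_resolve h.hC h.h0C hbj hsj (Or.inr rfl) hNa
          obtain ⟨hbj', hsideB⟩ := rep_resolve h.hB h.h0B hbi hsi (Or.inl hR'eq) hNb
          rw [if_neg (by
            intro hc
            exact absurd (hsideC.1 (hc.1 (hsideB.2 hR'eq))) (negF_ne_self h.hC h.h0C))]
          simp [hai, hbj', Nat.min_comm]
  · rintro rfl
    by_cases hiB : (i:ℤ) ∈ B <;> by_cases hjC : (j:ℤ) ∈ C
    · rw [if_pos (by tauto)]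
      refine Or.inr ⟨B, C, h.hB, h.hC, h.hBC, i, j, ⟨h.h0B, hiB, hbi⟩, ⟨h.h0C, hjC, hbj⟩,
        Or.inl ⟨h.hMmem, rfl⟩⟩
    · rw [if_neg (by tauto)]
      have hjnC : (j:ℤ) ∈ negF C := by
        rcases hsj with hh | hh
        · exact absurd hh hjC
        · exact mem_negF.2 (by simpa using hh)
      refine Or.inr ⟨B, negF C, h.hB, h.hnCmem, h.hBnC, i, j, ⟨h.h0B, hiB, hbi⟩,
        ⟨zero_not_mem_negF h.h0C, hjnC, ?_⟩, Or.inr ⟨?_, rfl⟩⟩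
      · intro b hb
        have := hbj _ (mem_negF.1 hb)
        simpa using this
      · rw [negF_image, negF_negF]
        exact h.hMmem
    · rw [if_neg (by tauto)]
      have hinB : (i:ℤ) ∈ negF B := by
        rcases hsi with hh | hh
        · exact absurd hh hiB
        · exact mem_negF.2 (by simpa using hh)
      refine Or.inr ⟨C, negF B, h.hC, h.hnBmem, h.hCnB, j, i, ⟨h.h0C, hjC, hbj⟩,
        ⟨zero_not_mem_negF h.h0B, hinB, ?_⟩, Or.inr ⟨?_, by rw [Nat.min_comm]⟩⟩
      · intro b hb
        have := hbi _ (mem_negF.1 hb)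
        simpa using this
      · rw [negF_image, negF_negF, Finset.union_comm]
        exact h.hMmem
    · rw [if_pos (by tauto)]
      have hinB : (i:ℤ) ∈ negF B := by
        rcases hsi with hh | hh
        · exact absurd hh hiB
        · exact mem_negF.2 (by simpa using hh)
      have hjnC : (j:ℤ) ∈ negF C := by
        rcases hsj with hh | hh
        · exact absurd hh hjC
        · exact mem_negF.2 (by simpa using hh)
      refine Or.inr ⟨negF B, negF C, h.hnBmem, h.hnCmem,
        fun hh => h.hBC (negF_inj hh), i, j,
        ⟨zero_not_mem_negF h.h0B, hinB, ?_⟩, ⟨zero_not_mem_negF h.h0C, hjnC, ?_⟩,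
        Or.inl ⟨by rw [← negF_union]; exact h.hnMmem, rfl⟩⟩
      · intro b hb
        have := hbi _ (mem_negF.1 hb)
        simpa using this
      · intro b hb
        have := hbj _ (mem_negF.1 hb)
        simpa using this

end ChainsBij
namespace ChainsBij

set_option linter.unusedVariables false
set_option autoImplicit false

open SignedPartition (le lt covby)

variable {n : ℕ}

section GMap

variable {u s : ℕ}

/-- Image of a finset of integers under the relabeling. -/
def gb (u s : ℕ) (B : Finset ℤ) : Finset ℤ := B.image (gfun (u:ℤ) (s:ℤ))

lemma gz_inj (hu : 1 ≤ u) (hs : 1 ≤ s) : Function.Injective (gfun (u:ℤ) (s:ℤ)) := by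
  intro a b hab
  exact gfun_inj (by exact_mod_cast hu) (by exact_mod_cast hs) hab

lemma gb_inv (hu : 1 ≤ u) (hs : 1 ≤ s) (B : Finset ℤ) : gb s u (gb u s B) = B := by
  unfold gb
  rw [Finset.image_image]
  have : (gfun (s:ℤ) (u:ℤ)) ∘ (gfun (u:ℤ) (s:ℤ)) = id := by
    funext k
    exact gfun_inv (by exact_mod_cast hu) (by exact_mod_cast hs) k
  rw [this, Finset.image_id]

lemma gb_inj (hu : 1 ≤ u) (hs : 1 ≤ s) {B C : Finset ℤ} (h : gb u s B = gb u s C) : B = C := by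
  have := congrArg (gb s u) h
  rwa [gb_inv hu hs, gb_inv hu hs] at this

lemma gb_negF (hu : 1 ≤ u) (hs : 1 ≤ s) (B : Finset ℤ) : gb u s (negF B) = negF (gb u s B) := by
  have hu' : (1:ℤ) ≤ (u:ℤ) := by exact_mod_cast hu
  have hs' : (1:ℤ) ≤ (s:ℤ) := by exact_mod_cast hs
  ext a
  constructor
  · intro ha
    obtain ⟨b, hb, rfl⟩ := Finset.mem_image.1 ha
    refine mem_negF.2 (Finset.mem_image.2 ⟨-b, mem_negF.1 hb, ?_⟩)
    rw [gfun_neg hu' hs']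
  · intro ha
    obtain ⟨c, hc, hgc⟩ := Finset.mem_image.1 (mem_negF.1 ha)
    refine Finset.mem_image.2 ⟨-c, mem_negF.2 (by simpa using hc), ?_⟩
    rw [gfun_neg hu' hs', hgc, neg_neg]

lemma gb_union (B C : Finset ℤ) : gb u s (B ∪ C) = gb u s B ∪ gb u s C :=
  Finset.image_union _ _

lemma gb_zero_not_mem (hu : 1 ≤ u) (hs : 1 ≤ s) {B : Finset ℤ} (h : (0:ℤ) ∉ B) : (0:ℤ) ∉ gb u s B := by
  intro hc
  obtain ⟨a, ha, hga⟩ := Finset.mem_image.1 hc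
  have : a = 0 := gfun_eq_zero (by exact_mod_cast hu) (by exact_mod_cast hs) hga
  exact h (this ▸ ha)

lemma gb_zero_mem (hu : 1 ≤ u) (hs : 1 ≤ s) {B : Finset ℤ} (h : (0:ℤ) ∈ B) : (0:ℤ) ∈ gb u s B := by
  refine Finset.mem_image.2 ⟨0, h, ?_⟩
  exact gfun_zero (by exact_mod_cast hu) (by exact_mod_cast hs)

lemma gb_ground (hu : 1 ≤ u) (hun : u ≤ n) (hs : 1 ≤ s) (hsn : s ≤ n) {B : Finset ℤ} (h : B ⊆ Finset.Icc (-(n:ℤ)) (n:ℤ)) :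
    gb u s B ⊆ Finset.Icc (-(n:ℤ)) (n:ℤ) := by
  intro t ht
  obtain ⟨a, ha, rfl⟩ := Finset.mem_image.1 ht
  have := h ha
  simp only [Finset.mem_Icc] at *
  exact (gfun_Icc (by exact_mod_cast hu) (by exact_mod_cast hun) (by exact_mod_cast hs)
    (by exact_mod_cast hsn) this.1 this.2).imp (fun a => a) (fun a => a)

/-- The automorphism of `Π_n^B` induced by the relabeling `gfun u s`. -/
def gP (hu : 1 ≤ u) (hun : u ≤ n) (hs : 1 ≤ s) (hsn : s ≤ n) (x : SignedPartition n) : SignedPartition n where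
  blocks := x.blocks.image (gb u s)
  nonempty_blocks := by
    intro W hW
    obtain ⟨B, hB, rfl⟩ := Finset.mem_image.1 hW
    exact (x.nonempty_blocks B hB).image _
  subset_ground := by
    intro W hW
    obtain ⟨B, hB, rfl⟩ := Finset.mem_image.1 hW
    exact gb_ground hu hun hs hsn (x.subset_ground B hB)
  disjoint_blocks := by
    intro W hW V hV hne
    obtain ⟨B, hB, rfl⟩ := Finset.mem_image.1 hW
    obtain ⟨C, hC, rfl⟩ := Finset.mem_image.1 hV
    have hBC : B ≠ C := fun hh => hne (hh ▸ rfl)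
    exact Finset.disjoint_image (gz_inj hu hs) |>.2 (x.disjoint_blocks B hB C hC hBC)
  covers := by
    intro t ht
    simp only [Finset.mem_Icc] at ht
    have ht' : gfun (s:ℤ) (u:ℤ) t ∈ Finset.Icc (-(n:ℤ)) (n:ℤ) := by
      simp only [Finset.mem_Icc]
      exact (gfun_Icc (by exact_mod_cast hs) (by exact_mod_cast hsn) (by exact_mod_cast hu)
        (by exact_mod_cast hun) ht.1 ht.2).imp (fun a => a) (fun a => a)
    obtain ⟨B, hB, htB⟩ := x.covers _ ht'
    refine ⟨gb u s B, Finset.mem_image_of_mem _ hB, ?_⟩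
    refine Finset.mem_image.2 ⟨_, htB, ?_⟩
    exact gfun_inv (by exact_mod_cast hs) (by exact_mod_cast hu) t
  neg_mem := by
    intro W hW
    obtain ⟨B, hB, rfl⟩ := Finset.mem_image.1 hW
    show negF (gb u s B) ∈ _
    rw [← gb_negF hu hs]
    exact Finset.mem_image_of_mem _ (negF_mem_blocks hB)
  zero_cond := by
    intro W hW i hi hiW hniW
    obtain ⟨B, hB, rfl⟩ := Finset.mem_image.1 hW
    obtain ⟨a, ha, hga⟩ := Finset.mem_image.1 hiW
    obtain ⟨b, hb, hgb⟩ := Finset.mem_image.1 hniW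
    have hba : b = -a := by
      apply gfun_inj (u := (u:ℤ)) (s := (s:ℤ)) (by exact_mod_cast hu) (by exact_mod_cast hs)
      rw [hgb, gfun_neg (by exact_mod_cast hu) (by exact_mod_cast hs), hga]
    have ha0 : a ≠ 0 := by
      intro hh
      rw [hh, gfun_zero (by exact_mod_cast hu) (by exact_mod_cast hs)] at hga
      omega
    have h0B : (0:ℤ) ∈ B := zero_in_w hB ha0 ha (hba ▸ hb)
    exact gb_zero_mem hu hs h0B

lemma gP_blocks (hu : 1 ≤ u) (hun : u ≤ n) (hs : 1 ≤ s) (hsn : s ≤ n) (x : SignedPartition n) :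
    (gP hu hun hs hsn x).blocks = x.blocks.image (gb u s) := rfl

lemma gP_mem (hu : 1 ≤ u) (hun : u ≤ n) (hs : 1 ≤ s) (hsn : s ≤ n) {x : SignedPartition n} {B : Finset ℤ} (hB : B ∈ x.blocks) :
    gb u s B ∈ (gP hu hun hs hsn x).blocks := Finset.mem_image_of_mem _ hB

lemma gP_inv (hu : 1 ≤ u) (hun : u ≤ n) (hs : 1 ≤ s) (hsn : s ≤ n) (x : SignedPartition n) :
    gP hs hsn hu hun (gP hu hun hs hsn x) = x := by
  apply sp_ext
  rw [gP_blocks, gP_blocks, Finset.image_image]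
  have : (gb s u) ∘ (gb u s) = id := by
    funext B
    exact gb_inv hu hs B
  rw [this, Finset.image_id]

lemma gP_le (hu : 1 ≤ u) (hun : u ≤ n) (hs : 1 ≤ s) (hsn : s ≤ n) {x y : SignedPartition n} (h : le x y) :
    le (gP hu hun hs hsn x) (gP hu hun hs hsn y) := by
  intro W hW
  obtain ⟨B, hB, rfl⟩ := Finset.mem_image.1 hW
  obtain ⟨C, hC, hBC⟩ := h B hB
  exact ⟨gb u s C, gP_mem hu hun hs hsn hC, Finset.image_subset_image hBC⟩

lemma gP_lt (hu : 1 ≤ u) (hun : u ≤ n) (hs : 1 ≤ s) (hsn : s ≤ n) {x y : SignedPartition n} (h : lt x y) :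
    lt (gP hu hun hs hsn x) (gP hu hun hs hsn y) := by
  rw [lt_iff'] at h ⊢
  refine ⟨gP_le hu hun hs hsn h.1, fun hc => h.2 ?_⟩
  have := congrArg (gP hs hsn hu hun) hc
  rwa [gP_inv hu hun hs hsn, gP_inv hu hun hs hsn] at this

lemma gb_image_set (F : Finset (Finset ℤ)) :
    Finset.image (gb u s) F = F.image (gb u s) := rfl

lemma gP_mergeSpec (hu : 1 ≤ u) (hun : u ≤ n) (hs : 1 ≤ s) (hsn : s ≤ n) {x y : SignedPartition n} {B C : Finset ℤ} (h : MergeSpec x y B C) :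
    MergeSpec (gP hu hun hs hsn x) (gP hu hun hs hsn y) (gb u s B) (gb u s C) := by
  refine ⟨gP_mem hu hun hs hsn h.hB, gP_mem hu hun hs hsn h.hC,
    gb_zero_not_mem hu hs h.h0B, gb_zero_not_mem hu hs h.h0C,
    fun hh => h.hBC (gb_inj hu hs hh), ?_, ?_⟩
  · rw [← gb_negF hu hs]
    exact fun hh => h.hCnB (gb_inj hu hs hh)
  · rw [gP_blocks, h.hy]
    unfold mergeBlocks
    rw [Finset.image_union, Finset.image_sdiff _ _ (fun a b hab => gb_inj hu hs hab)]
    congr 1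
    · congr 1
      ext D
      simp only [Finset.mem_image, Finset.mem_insert, Finset.mem_singleton]
      constructor
      · rintro ⟨E, hE, rfl⟩
        rcases hE with rfl | rfl | rfl | rfl
        · exact Or.inl rfl
        · exact Or.inr (Or.inl rfl)
        · exact Or.inr (Or.inr (Or.inl (gb_negF hu hs B)))
        · exact Or.inr (Or.inr (Or.inr (gb_negF hu hs C)))
      · rintro (rfl | rfl | rfl | rfl)
        · exact ⟨B, by simp⟩
        · exact ⟨C, by simp⟩
        · exact ⟨negF B, by simp [gb_negF hu hs]⟩
        · exact ⟨negF C, by simp [gb_negF hu hs]⟩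
    · ext D
      simp only [Finset.mem_image, Finset.mem_insert, Finset.mem_singleton]
      constructor
      · rintro ⟨E, hE, rfl⟩
        rcases hE with rfl | rfl
        · exact Or.inl (gb_union B C)
        · exact Or.inr (by rw [gb_negF hu hs, gb_union])
      · rintro (rfl | rfl)
        · exact ⟨B ∪ C, by simp [gb_union]⟩
        · exact ⟨negF (B ∪ C), by simp [gb_negF hu hs, gb_union]⟩

lemma gP_absorbSpec (hu : 1 ≤ u) (hun : u ≤ n) (hs : 1 ≤ s) (hsn : s ≤ n) {x y : SignedPartition n} {Z B : Finset ℤ} (h : AbsorbSpec x y Z B) :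
    AbsorbSpec (gP hu hun hs hsn x) (gP hu hun hs hsn y) (gb u s Z) (gb u s B) := by
  refine ⟨gP_mem hu hun hs hsn h.hZ, gb_zero_mem hu hs h.h0Z, gP_mem hu hun hs hsn h.hB,
    gb_zero_not_mem hu hs h.h0B, ?_⟩
  rw [gP_blocks, h.hy]
  rw [Finset.image_union, Finset.image_sdiff _ _ (fun a b hab => gb_inj hu hs hab)]
  congr 1
  · congr 1
    ext D
    simp only [Finset.mem_image, Finset.mem_insert, Finset.mem_singleton]
    constructor
    · rintro ⟨E, hE, rfl⟩
      rcases hE with rfl | rfl | rfl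
      · exact Or.inl rfl
      · exact Or.inr (Or.inl rfl)
      · exact Or.inr (Or.inr (gb_negF hu hs B))
    · rintro (rfl | rfl | rfl)
      · exact ⟨Z, by simp⟩
      · exact ⟨B, by simp⟩
      · exact ⟨negF B, by simp [gb_negF hu hs]⟩
  · ext D
    simp only [Finset.mem_image, Finset.mem_singleton]
    constructor
    · rintro ⟨E, hE, rfl⟩
      subst hE
      rw [gb_union, gb_union, gb_negF hu hs]
    · rintro rfl
      exact ⟨Z ∪ B ∪ negF B, by simp [gb_union, gb_negF hu hs]⟩

end GMap
end ChainsBij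
namespace ChainsBij

set_option linter.unusedVariables false
set_option autoImplicit false

open SignedPartition (le lt covby)

variable {n : ℕ}

lemma gfun_le {nz u s : ℤ} (hu : 1 ≤ u) (hun : u ≤ nz) (hs : 1 ≤ s) (hsn : s ≤ nz)
    {a b : ℤ} (ha1 : 1 ≤ a) (han : a ≤ nz) (hau : a ≠ u) (hb1 : 1 ≤ b) (hbn : b ≤ nz)
    (hbu : b ≠ u) : a ≤ b ↔ gfun u s a ≤ gfun u s b := by
  unfold gfun hfun; split_ifs <;> omega

lemma gb_mem_iff {u s : ℕ} (hu : 1 ≤ u) (hs : 1 ≤ s) {B : Finset ℤ} {a : ℤ} :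
    gfun (u:ℤ) (s:ℤ) a ∈ gb u s B ↔ a ∈ B := by
  constructor
  · intro h
    obtain ⟨b, hb, hgb⟩ := Finset.mem_image.1 h
    have : b = a := gfun_inj (by exact_mod_cast hu) (by exact_mod_cast hs) hgb
    exact this ▸ hb
  · exact fun h => Finset.mem_image_of_mem _ h

/-- The transformation of labels induced by the relabeling. -/
def Tmap (u s : ℕ) : ℕ × ℕ → ℕ × ℕ :=
  fun l => if l.1 = 1 then l else (l.1, (gfun (u:ℤ) (s:ℤ) (l.2:ℤ)).toNat)

/-- Admissible labels: either the signed label or a label with an allowed second entry. -/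
def Adm (u n : ℕ) (l : ℕ × ℕ) : Prop :=
  l = (1, 1) ∨ ((l.1 = 0 ∨ l.1 = 2) ∧ 1 ≤ l.2 ∧ l.2 ≤ n ∧ l.2 ≠ u)

/-- The full package carried along each edge of a maximal chain. -/
def EdgePack {u s : ℕ} (hu1 : 1 ≤ u) (hun : u ≤ n) (hs1 : 1 ≤ s) (hsn : s ≤ n)
    (x y : SignedPartition n) : Prop :=
  ∃ l₀, Adm u n l₀ ∧ (∀ l, ELlabel x y l ↔ l = l₀) ∧
    (∀ l, ELlabel (gP hu1 hun hs1 hsn x) (gP hu1 hun hs1 hsn y) l ↔ l = Tmap u s l₀)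

lemma Tmap_one (u s : ℕ) : Tmap u s (1, 1) = (1, 1) := by simp [Tmap]

lemma edgePack_absorb {u s : ℕ} (hu1 : 1 ≤ u) (hun : u ≤ n) (hs1 : 1 ≤ s) (hsn : s ≤ n)
    {x y : SignedPartition n} {Z B : Finset ℤ} (h : AbsorbSpec x y Z B) :
    EdgePack hu1 hun hs1 hsn x y := by
  refine ⟨(1, 1), Or.inl rfl, h.label, ?_⟩
  rw [Tmap_one]
  exact (gP_absorbSpec hu1 hun hs1 hsn h).label

lemma edgePack_merge {u s : ℕ} (hu1 : 1 ≤ u) (hun : u ≤ n) (hs1 : 1 ≤ s) (hsn : s ≤ n)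
    {x y : SignedPartition n} {B C : Finset ℤ} (h : MergeSpec x y B C)
    (hav : ∀ t ∈ B ∪ C, t.natAbs ≠ u) :
    EdgePack hu1 hun hs1 hsn x y := by
  have huz : (1:ℤ) ≤ (u:ℤ) := by exact_mod_cast hu1
  have hsz : (1:ℤ) ≤ (s:ℤ) := by exact_mod_cast hs1
  have hunz : (u:ℤ) ≤ (n:ℤ) := by exact_mod_cast hun
  have hsnz : (s:ℤ) ≤ (n:ℤ) := by exact_mod_cast hsn
  obtain ⟨i, hi1, hbi, hsi⟩ := exists_rep h.hB h.h0B
  obtain ⟨j, hj1, hbj, hsj⟩ := exists_rep h.hC h.h0C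
  -- ranges of the representatives
  have hiB : ∃ t ∈ B, t.natAbs = i := by
    rcases hsi with hh | hh
    · exact ⟨(i:ℤ), hh, by simp⟩
    · exact ⟨-(i:ℤ), hh, by simp⟩
  have hjC : ∃ t ∈ C, t.natAbs = j := by
    rcases hsj with hh | hh
    · exact ⟨(j:ℤ), hh, by simp⟩
    · exact ⟨-(j:ℤ), hh, by simp⟩
  have hin : i ≤ n := by
    obtain ⟨t, ht, hti⟩ := hiB
    have := x.subset_ground B h.hB ht
    simp only [Finset.mem_Icc] at this
    omega
  have hjn : j ≤ n := by
    obtain ⟨t, ht, htj⟩ := hjC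
    have := x.subset_ground C h.hC ht
    simp only [Finset.mem_Icc] at this
    omega
  have hiu : i ≠ u := by
    obtain ⟨t, ht, hti⟩ := hiB
    have := hav t (Finset.mem_union_left _ ht)
    omega
  have hju : j ≠ u := by
    obtain ⟨t, ht, htj⟩ := hjC
    have := hav t (Finset.mem_union_right _ ht)
    omega
  -- transformed representatives
  set gi : ℤ := gfun (u:ℤ) (s:ℤ) (i:ℤ) with hgi
  set gj : ℤ := gfun (u:ℤ) (s:ℤ) (j:ℤ) with hgj
  have hgi1 : 1 ≤ gi := gfun_pos huz hsz (by exact_mod_cast hi1)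
  have hgj1 : 1 ≤ gj := gfun_pos huz hsz (by exact_mod_cast hj1)
  have hgicast : ((gi.toNat : ℕ) : ℤ) = gi := Int.toNat_of_nonneg (by omega)
  have hgjcast : ((gj.toNat : ℕ) : ℤ) = gj := Int.toNat_of_nonneg (by omega)
  -- bound transport
  have hboundB : ∀ b ∈ gb u s B, gi.toNat ≤ b.natAbs := by
    intro b hb
    obtain ⟨a, ha, rfl⟩ := Finset.mem_image.1 hb
    have ha0 : a ≠ 0 := fun hh => h.h0B (hh ▸ ha)
    have habs := gfun_natAbs huz hsz ha0
    have hrange := x.subset_ground B h.hB ha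
    simp only [Finset.mem_Icc] at hrange
    have hana : 1 ≤ (a.natAbs : ℤ) ∧ (a.natAbs : ℤ) ≤ (n:ℤ) := by omega
    have hanau : (a.natAbs : ℤ) ≠ (u:ℤ) := by
      have := hav a (Finset.mem_union_left _ ha)
      omega
    have hle : (i:ℤ) ≤ (a.natAbs : ℤ) := by exact_mod_cast hbi a ha
    have := (gfun_le huz hunz hsz hsnz (by exact_mod_cast hi1) (by exact_mod_cast hin)
      (by exact_mod_cast (fun hh => hiu (by exact_mod_cast hh) : (i:ℤ) ≠ (u:ℤ)))
      hana.1 hana.2 hanau).1 hle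
    omega
  have hboundC : ∀ b ∈ gb u s C, gj.toNat ≤ b.natAbs := by
    intro b hb
    obtain ⟨a, ha, rfl⟩ := Finset.mem_image.1 hb
    have ha0 : a ≠ 0 := fun hh => h.h0C (hh ▸ ha)
    have habs := gfun_natAbs huz hsz ha0
    have hrange := x.subset_ground C h.hC ha
    simp only [Finset.mem_Icc] at hrange
    have hana : 1 ≤ (a.natAbs : ℤ) ∧ (a.natAbs : ℤ) ≤ (n:ℤ) := by omega
    have hanau : (a.natAbs : ℤ) ≠ (u:ℤ) := by
      have := hav a (Finset.mem_union_right _ ha)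
      omega
    have hle : (j:ℤ) ≤ (a.natAbs : ℤ) := by exact_mod_cast hbj a ha
    have := (gfun_le huz hunz hsz hsnz (by exact_mod_cast hj1) (by exact_mod_cast hjn)
      (by exact_mod_cast (fun hh => hju (by exact_mod_cast hh) : (j:ℤ) ≠ (u:ℤ)))
      hana.1 hana.2 hanau).1 hle
    omega
  have hsideB : ((gi.toNat : ℤ) ∈ gb u s B ∨ -(gi.toNat : ℤ) ∈ gb u s B) := by
    rw [hgicast]
    rcases hsi with hh | hh
    · exact Or.inl (Finset.mem_image_of_mem _ hh)
    · right
      rw [← gfun_neg huz hsz]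
      exact Finset.mem_image_of_mem _ hh
  have hsideC : ((gj.toNat : ℤ) ∈ gb u s C ∨ -(gj.toNat : ℤ) ∈ gb u s C) := by
    rw [hgjcast]
    rcases hsj with hh | hh
    · exact Or.inl (Finset.mem_image_of_mem _ hh)
    · right
      rw [← gfun_neg huz hsz]
      exact Finset.mem_image_of_mem _ hh
  have hlab := h.label hbi hsi hbj hsj
  have hlab' := (gP_mergeSpec hu1 hun hs1 hsn h).label hboundB hsideB hboundC hsideC
  have hiuz : (i:ℤ) ≠ (u:ℤ) := by exact_mod_cast hiu
  have hjuz : (j:ℤ) ≠ (u:ℤ) := by exact_mod_cast hju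
  have hi1z : (1:ℤ) ≤ (i:ℤ) := by exact_mod_cast hi1
  have hinz : (i:ℤ) ≤ (n:ℤ) := by exact_mod_cast hin
  have hj1z : (1:ℤ) ≤ (j:ℤ) := by exact_mod_cast hj1
  have hjnz : (j:ℤ) ≤ (n:ℤ) := by exact_mod_cast hjn
  -- the membership conditions agree
  have hcond : (((gi.toNat : ℕ):ℤ) ∈ gb u s B ↔ ((gj.toNat : ℕ):ℤ) ∈ gb u s C) ↔
      ((i:ℤ) ∈ B ↔ (j:ℤ) ∈ C) := by
    rw [hgicast, hgjcast, hgi, hgj, gb_mem_iff hu1 hs1, gb_mem_iff hu1 hs1]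
  have hmono : i ≤ j ↔ gi ≤ gj := by
    rw [hgi, hgj, ← gfun_le huz hunz hsz hsnz hi1z hinz hiuz hj1z hjnz hjuz]
    exact ⟨fun hh => by exact_mod_cast hh, fun hh => by exact_mod_cast hh⟩
  have hmono' : j ≤ i ↔ gj ≤ gi := by
    rw [hgi, hgj, ← gfun_le huz hunz hsz hsnz hj1z hjnz hjuz hi1z hinz hiuz]
    exact ⟨fun hh => by exact_mod_cast hh, fun hh => by exact_mod_cast hh⟩
  have hmax : (gfun (u:ℤ) (s:ℤ) ((max i j : ℕ) : ℤ)).toNat = max gi.toNat gj.toNat := by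
    rcases Nat.le_total i j with hh | hh
    · rw [Nat.max_eq_right hh, ← hgj]
      have := hmono.1 hh
      omega
    · rw [Nat.max_eq_left hh, ← hgi]
      have := hmono'.1 hh
      omega
  have hmin : (gfun (u:ℤ) (s:ℤ) ((min i j : ℕ) : ℤ)).toNat = min gi.toNat gj.toNat := by
    rcases Nat.le_total i j with hh | hh
    · rw [Nat.min_eq_left hh, ← hgi]
      have := hmono.1 hh
      omega
    · rw [Nat.min_eq_right hh, ← hgj]
      have := hmono'.1 hh
      omega
  have hTpos : Tmap u s ((0:ℕ), max i j) = ((0:ℕ), max gi.toNat gj.toNat) := by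
    unfold Tmap
    rw [if_neg (by norm_num : ¬ (((0:ℕ), max i j).1 = 1))]
    simp only [Prod.mk.injEq]
    exact ⟨trivial, hmax⟩
  have hTneg : Tmap u s ((2:ℕ), min i j) = ((2:ℕ), min gi.toNat gj.toNat) := by
    unfold Tmap
    rw [if_neg (by norm_num : ¬ (((2:ℕ), min i j).1 = 1))]
    simp only [Prod.mk.injEq]
    exact ⟨trivial, hmin⟩
  refine ⟨if ((i:ℤ) ∈ B ↔ (j:ℤ) ∈ C) then ((0:ℕ), max i j) else (2, min i j), ?_, hlab, ?_⟩
  · by_cases hc : ((i:ℤ) ∈ B ↔ (j:ℤ) ∈ C)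
    · rw [if_pos hc]
      exact Or.inr ⟨Or.inl rfl, by omega, by omega, by omega⟩
    · rw [if_neg hc]
      exact Or.inr ⟨Or.inr rfl, by omega, by omega, by omega⟩
  · intro l
    rw [hlab' l]
    by_cases hc : ((i:ℤ) ∈ B ↔ (j:ℤ) ∈ C)
    · rw [if_pos (hcond.2 hc), if_pos hc, hTpos]
    · rw [if_neg (fun hx => hc (hcond.1 hx)), if_neg hc, hTneg]
end ChainsBij
namespace ChainsBij

set_option linter.unusedVariables false
set_option autoImplicit false

open SignedPartition (le lt covby)

variable {n : ℕ}

lemma gb_triple {a b : ℕ} (ha : 1 ≤ a) (hb : 1 ≤ b) (k : ℤ) :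
    gb a b ({k, 0, -k} : Finset ℤ) = {gfun (a:ℤ) (b:ℤ) k, 0, -(gfun (a:ℤ) (b:ℤ) k)} := by
  have haz : (1:ℤ) ≤ (a:ℤ) := by exact_mod_cast ha
  have hbz : (1:ℤ) ≤ (b:ℤ) := by exact_mod_cast hb
  unfold gb
  rw [Finset.image_insert, Finset.image_insert, Finset.image_singleton,
    gfun_zero haz hbz, gfun_neg haz hbz]

lemma gb_Icc {a b : ℕ} (ha : 1 ≤ a) (han : a ≤ n) (hb : 1 ≤ b) (hbn : b ≤ n) :
    gb a b (Finset.Icc (-(n:ℤ)) (n:ℤ)) = Finset.Icc (-(n:ℤ)) (n:ℤ) := by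
  have haz : (1:ℤ) ≤ (a:ℤ) := by exact_mod_cast ha
  have hbz : (1:ℤ) ≤ (b:ℤ) := by exact_mod_cast hb
  have hanz : (a:ℤ) ≤ (n:ℤ) := by exact_mod_cast han
  have hbnz : (b:ℤ) ≤ (n:ℤ) := by exact_mod_cast hbn
  apply Finset.Subset.antisymm
  · intro t ht
    obtain ⟨c, hc, rfl⟩ := Finset.mem_image.1 ht
    simp only [Finset.mem_Icc] at *
    exact (gfun_Icc haz hanz hbz hbnz hc.1 hc.2).imp (fun q => q) (fun q => q)
  · intro t ht
    simp only [Finset.mem_Icc] at ht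
    refine Finset.mem_image.2 ⟨gfun (b:ℤ) (a:ℤ) t, ?_, gfun_inv hbz haz t⟩
    simp only [Finset.mem_Icc]
    exact (gfun_Icc hbz hbnz haz hanz ht.1 ht.2).imp (fun q => q) (fun q => q)

theorem chain_transport {u s : ℕ} (hu1 : 1 ≤ u) (hun : u ≤ n) (hs1 : 1 ≤ s) (hsn : s ≤ n)
    {c : List (SignedPartition n)} (hc : IsMaxChainLD u c)
    (hnot : ¬ ∀ z ∈ c, memLD (u-1) z) :
    IsMaxChainLD s (c.map (gP hu1 hun hs1 hsn)) ∧
    (¬ ∀ z ∈ c.map (gP hu1 hun hs1 hsn), memLD (s-1) z) ∧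
    c.Chain' (EdgePack hu1 hun hs1 hsn) := by
  have huz : (1:ℤ) ≤ (u:ℤ) := by exact_mod_cast hu1
  have hsz : (1:ℤ) ≤ (s:ℤ) := by exact_mod_cast hs1
  obtain ⟨hch, ⟨xb, hxb, hbot⟩, ⟨yt, hyt, htop⟩⟩ := hc
  set f := gP hu1 hun hs1 hsn with hf
  -- basic indexing facts
  have hget : ∀ (i : ℕ) (h : i < c.length - 1),
      covLD u (c.get ⟨i, by omega⟩) (c.get ⟨i+1, by omega⟩) := fun i h => List.isChain_iff_getElem.1 hch i (by omega)
  have hle : ∀ (i j : ℕ) (hij : i ≤ j) (hj : j < c.length),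
      le (c.get ⟨i, by omega⟩) (c.get ⟨j, hj⟩) := by
    intro i j hij hj
    induction j with
    | zero =>
      have : i = 0 := by omega
      subst this
      exact le_refl' _
    | succ k ih =>
      rcases Nat.lt_or_ge i (k+1) with hlt | hge
      · have h1 := ih (by omega) (by omega)
        have h2 := hget k (by omega)
        exact le_trans' h1 h2.2.2.1.1
      · have : i = k + 1 := by omega
        subst this
        exact le_refl' _
  have hlen1 : 0 < c.length := by
    cases c with
    | nil => simp at hxb
    | cons a l => simp
  have hmemall : ∀ (i : ℕ) (hi : i < c.length), memLD u (c.get ⟨i, hi⟩) := by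
    intro i hi
    rcases Nat.lt_or_ge i (c.length - 1) with hlt | hge
    · exact (hget i hlt).1
    · -- i = c.length - 1
      rcases Nat.eq_zero_or_pos i with h0 | hpos
      · subst h0
        -- single element chain: xb = yt, contradiction unless... handle via card
        by_cases hlen : 1 < c.length
        · exact absurd hlen (by omega)
        · -- length = 1 : bottom = top, impossible since n ≥ 1
          exfalso
          have hl1 : c.length = 1 := by omega
          have hxy : xb = yt := by
            cases c with
            | nil => simp at hxb
            | cons a l =>
              have : l = [] := by simpa using hl1
              subst this
              simp at hxb hyt
              rw [← hxb, ← hyt]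
          have hIcc : Finset.Icc (-(n:ℤ)) (n:ℤ) ∈ yt.blocks := by rw [htop]; simp
          have := hbot _ (hxy ▸ hIcc)
          rw [Int.card_Icc] at this
          omega
      · obtain ⟨i', rfl⟩ : ∃ i', i = i' + 1 := ⟨i - 1, by omega⟩
        exact (hget i' (by omega)).2.1
  -- the element with zero block {u,0,-u}
  have hv : ∃ (iv : ℕ) (hiv : iv < c.length),
      ({(u:ℤ), 0, -(u:ℤ)} : Finset ℤ) ∈ (c.get ⟨iv, hiv⟩).blocks := by
    push_neg at hnot
    obtain ⟨z, hz, hmz⟩ := hnot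
    unfold memLD at hmz
    push_neg at hmz
    obtain ⟨k, hk1, hk2, hkmem⟩ := hmz
    obtain ⟨⟨iz, hiz⟩, rfl⟩ := List.mem_iff_get.1 hz
    have hmu := hmemall iz hiz
    have hku : k = (u:ℤ) := by
      by_contra hne
      have hklt : (u:ℤ) < k := by
        have : ((u-1 : ℕ) : ℤ) = (u:ℤ) - 1 := by omega
        omega
      exact hmu k hklt hk2 hkmem
    subst hku
    exact ⟨iz, hiz, hkmem⟩
  obtain ⟨iv, hiv, hV⟩ := hv
  have h0V : (0:ℤ) ∈ ({(u:ℤ), 0, -(u:ℤ)} : Finset ℤ) := by simp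
  -- only u appears in triple blocks
  have hZok : ∀ (i : ℕ) (hi : i < c.length) (j : ℤ), 1 ≤ j →
      ({j, 0, -j} : Finset ℤ) ∈ (c.get ⟨i, hi⟩).blocks → j = (u:ℤ) := by
    intro i hi j hj hW
    have h0W : (0:ℤ) ∈ ({j, 0, -j} : Finset ℤ) := by simp
    rcases Nat.le_total i iv with hii | hii
    · have hsub := zero_mono (hle i iv hii hiv) hW h0W hV h0V
      have : j ∈ ({(u:ℤ), 0, -(u:ℤ)} : Finset ℤ) := hsub (by simp)
      simp only [Finset.mem_insert, Finset.mem_singleton] at this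
      omega
    · have hsub := zero_mono (hle iv i hii hi) hV h0V hW h0W
      have : (u:ℤ) ∈ ({j, 0, -j} : Finset ℤ) := hsub (by simp)
      simp only [Finset.mem_insert, Finset.mem_singleton] at this
      omega
  -- classification with avoidance for each edge
  have hspec : ∀ (i : ℕ) (hi : i < c.length - 1),
      (∃ B C, MergeSpec (c.get ⟨i, by omega⟩) (c.get ⟨i+1, by omega⟩) B C ∧
        ∀ t ∈ B ∪ C, t.natAbs ≠ u) ∨
      (∃ Z B, AbsorbSpec (c.get ⟨i, by omega⟩) (c.get ⟨i+1, by omega⟩) Z B) := by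
    intro i hi
    rcases classify (hget i hi) with ⟨B, C, hBC⟩ | habs
    · left
      refine ⟨B, C, hBC, ?_⟩
      intro t ht hta
      have ht0 : t ≠ 0 := by
        intro hh
        subst hh
        rcases Finset.mem_union.1 ht with h' | h'
        · exact hBC.h0B h'
        · exact hBC.h0C h'
      have htV : t ∈ ({(u:ℤ), 0, -(u:ℤ)} : Finset ℤ) := by
        simp only [Finset.mem_insert, Finset.mem_singleton]
        omega
      rcases Nat.lt_or_ge iv (i+1) with hlt | hge
      · -- iv ≤ i : u is already in the zero block of x
        obtain ⟨Zx, hZx, h0Zx⟩ := exists_zeroBlock (c.get ⟨i, by omega⟩)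
        have hVZ := zero_mono (hle iv i (by omega) (by omega)) hV h0V hZx h0Zx
        have htZx : t ∈ Zx := hVZ htV
        rcases Finset.mem_union.1 ht with h' | h'
        · have : B = Zx := block_eq_of_mem hBC.hB hZx h' htZx
          exact hBC.h0B (this ▸ h0Zx)
        · have : C = Zx := block_eq_of_mem hBC.hC hZx h' htZx
          exact hBC.h0C (this ▸ h0Zx)
      · -- i+1 ≤ iv : B ∪ C would sit inside {u,0,-u}
        have hMV := sub_of_meet (hle (i+1) iv hge hiv) hBC.hMmem hV ht htV
        obtain ⟨b, hb⟩ := (c.get ⟨i, by omega⟩).nonempty_blocks B hBC.hB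
        obtain ⟨cc, hcc⟩ := (c.get ⟨i, by omega⟩).nonempty_blocks C hBC.hC
        have hbM : b ∈ B ∪ C := Finset.mem_union_left _ hb
        have hccM : cc ∈ B ∪ C := Finset.mem_union_right _ hcc
        have hb0 : b ≠ 0 := fun hh => hBC.h0B (hh ▸ hb)
        have hcc0 : cc ≠ 0 := fun hh => hBC.h0C (hh ▸ hcc)
        have hbV : b = (u:ℤ) ∨ b = -(u:ℤ) := by
          have := hMV hbM
          simp only [Finset.mem_insert, Finset.mem_singleton] at this
          omega
        have hccV : cc = (u:ℤ) ∨ cc = -(u:ℤ) := by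
          have := hMV hccM
          simp only [Finset.mem_insert, Finset.mem_singleton] at this
          omega
        have hbcc : b ≠ cc := by
          intro hh
          exact Finset.disjoint_left.1 hBC.disjBC hb (hh ▸ hcc)
        have huM : (u:ℤ) ∈ B ∪ C ∧ -(u:ℤ) ∈ B ∪ C := by
          rcases hbV with rfl | rfl <;> rcases hccV with h2 | h2
          · exact absurd h2.symm hbcc
          · exact ⟨hbM, h2 ▸ hccM⟩
          · exact ⟨h2 ▸ hccM, hbM⟩
          · exact absurd h2.symm hbcc
        have h0M := (c.get ⟨i+1, by omega⟩).zero_cond _ hBC.hMmem (u:ℤ) (by omega)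
          huM.1 huM.2
        exact hBC.h0M h0M
    · exact Or.inr habs
  -- memLD s for the images
  have hmemS : ∀ (i : ℕ) (hi : i < c.length), memLD s (f (c.get ⟨i, hi⟩)) := by
    intro i hi k hk1 hk2 hkmem
    rw [hf] at hkmem
    obtain ⟨D, hD, hDeq⟩ := Finset.mem_image.1 hkmem
    have hDval : D = gb s u ({k, 0, -k} : Finset ℤ) := by
      rw [← hDeq, gb_inv hu1 hs1]
    rw [gb_triple hs1 hu1] at hDval
    have hgk1 : 1 ≤ gfun (s:ℤ) (u:ℤ) k := gfun_pos hsz huz (by omega)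
    have := hZok i hi _ hgk1 (hDval ▸ hD)
    have hku : gfun (u:ℤ) (s:ℤ) (gfun (s:ℤ) (u:ℤ) k) = gfun (u:ℤ) (s:ℤ) (u:ℤ) := by rw [this]
    rw [gfun_inv hsz huz, gfun_u huz hsz] at hku
    omega
  -- cover in L(D_{n,s}) for the images
  have hcovS : ∀ (i : ℕ) (hi : i < c.length - 1),
      covLD s (f (c.get ⟨i, by omega⟩)) (f (c.get ⟨i+1, by omega⟩)) := by
    intro i hi
    refine ⟨hmemS i (by omega), hmemS (i+1) (by omega),
      gP_lt hu1 hun hs1 hsn (hget i hi).2.2.1, ?_⟩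
    intro z hmz hlt1 hlt2
    have hsand : z = f (c.get ⟨i, by omega⟩) ∨ z = f (c.get ⟨i+1, by omega⟩) := by
      rcases hspec i hi with ⟨B, C, hBC, _⟩ | ⟨Z, B, hAB⟩
      · exact (gP_mergeSpec hu1 hun hs1 hsn hBC).sandwich hlt1.1 hlt2.1
      · exact (gP_absorbSpec hu1 hun hs1 hsn hAB).sandwich hlt1.1 hlt2.1
    rcases hsand with rfl | rfl
    · exact (lt_iff'.1 hlt1).2 rfl
    · exact (lt_iff'.1 hlt2).2 rfl
  refine ⟨⟨?_, ?_, ?_⟩, ?_, ?_⟩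
  · -- Chain' (covLD s)
    apply List.isChain_iff_getElem.2
    intro i hi
    have hi' : i < c.length - 1 := by simp at hi; omega
    have e1 : (c.map f).get ⟨i, by simpa using Nat.lt_of_lt_of_le hi' (by omega)⟩ =
        f (c.get ⟨i, by omega⟩) := by simp
    have e2 : (c.map f).get ⟨i+1, by simp; omega⟩ = f (c.get ⟨i+1, by omega⟩) :=
      by simp
    rw [List.getElem_map, List.getElem_map]
    exact hcovS i hi'
  · -- bottom
    refine ⟨f xb, ?_, ?_⟩
    · rw [List.head?_map, hxb]; rfl
    · intro W hW
      obtain ⟨B, hB, rfl⟩ := Finset.mem_image.1 hW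
      have hcard : (gb u s B).card = B.card := Finset.card_image_of_injective _ (gz_inj hu1 hs1)
      rw [hcard]
      exact hbot B hB
  · -- top
    refine ⟨f yt, ?_, ?_⟩
    · rw [List.getLast?_map, hyt]; rfl
    · show (f yt).blocks = _
      rw [hf, gP_blocks, htop, Finset.image_singleton, gb_Icc hu1 hun hs1 hsn]
  · -- not contained in L(D_{n,s-1})
    intro hall
    have hmemv : c.get ⟨iv, hiv⟩ ∈ c := List.get_mem c ⟨iv, hiv⟩
    have hw := hall (f (c.get ⟨iv, hiv⟩)) (List.mem_map_of_mem (f := f) hmemv)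
    have himg : ({(s:ℤ), 0, -(s:ℤ)} : Finset ℤ) ∈ (f (c.get ⟨iv, hiv⟩)).blocks := by
      have hmm := gP_mem hu1 hun hs1 hsn hV
      rw [gb_triple hu1 hs1, gfun_u huz hsz] at hmm
      rw [hf]
      exact hmm
    have hcast : ((s-1 : ℕ) : ℤ) < (s:ℤ) := by omega
    exact hw (s:ℤ) hcast (by exact_mod_cast hsn) himg
  · -- the edge packs
    apply List.isChain_iff_getElem.2
    intro i hi
    rcases hspec i (by omega) with ⟨B, C, hBC, hav⟩ | ⟨Z, B, hAB⟩
    · exact edgePack_merge hu1 hun hs1 hsn hBC hav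
    · exact edgePack_absorb hu1 hun hs1 hsn hAB

end ChainsBij
namespace ChainsBij

set_option linter.unusedVariables false
set_option autoImplicit false

open SignedPartition (le lt covby)

variable {n : ℕ}

lemma ells_nil {l : List (ℕ × ℕ)} (h : ELLabelSeq ([] : List (SignedPartition n)) l) :
    l = [] := by
  cases l with
  | nil => rfl
  | cons p ls => exact (h : False).elim

lemma ells_single {a : SignedPartition n} {l : List (ℕ × ℕ)} (h : ELLabelSeq [a] l) :
    l = [] := by
  cases l with
  | nil => rfl
  | cons p ls => exact (h : False).elim

lemma ells_cons {a b : SignedPartition n} {rest : List (SignedPartition n)}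
    {l : List (ℕ × ℕ)} (h : ELLabelSeq (a :: b :: rest) l) :
    ∃ p ls, l = p :: ls ∧ ELlabel a b p ∧ ELLabelSeq (b :: rest) ls := by
  cases l with
  | nil => exact (h : False).elim
  | cons p ls => exact ⟨p, ls, rfl, h.1, h.2⟩

lemma seq_transport {u s : ℕ} (hu1 : 1 ≤ u) (hun : u ≤ n) (hs1 : 1 ≤ s) (hsn : s ≤ n) :
    ∀ (c : List (SignedPartition n)) (l₁ l₂ : List (ℕ × ℕ)),
      c.Chain' (EdgePack hu1 hun hs1 hsn) →
      ELLabelSeq c l₁ → ELLabelSeq (c.map (gP hu1 hun hs1 hsn)) l₂ →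
      l₂ = l₁.map (Tmap u s) ∧ ∀ l ∈ l₁, Adm u n l := by
  intro c
  induction c with
  | nil =>
    intro l₁ l₂ _ h1 h2
    have e1 := ells_nil h1
    have e2 : l₂ = [] := ells_nil (show ELLabelSeq ([] : List (SignedPartition n)) l₂ by
      simpa using h2)
    subst e1 e2
    exact ⟨rfl, by simp⟩
  | cons a tail ih =>
    intro l₁ l₂ hch h1 h2
    cases tail with
    | nil =>
      have e1 := ells_single h1
      have e2 : l₂ = [] := ells_single (a := gP hu1 hun hs1 hsn a) (by simpa using h2)
      subst e1 e2
      exact ⟨rfl, by simp⟩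
    | cons b rest =>
      obtain ⟨p, ls, rfl, hpl, h1'⟩ := ells_cons h1
      have h2' : ELLabelSeq ((gP hu1 hun hs1 hsn a) :: (gP hu1 hun hs1 hsn b) ::
          rest.map (gP hu1 hun hs1 hsn)) l₂ := by simpa using h2
      obtain ⟨q, ls', rfl, hql, h2''⟩ := ells_cons h2'
      obtain ⟨l₀, hAdm, hiff, hiff'⟩ := (List.isChain_cons_cons.1 hch).1
      have hp : p = l₀ := (hiff p).1 hpl
      have hq : q = Tmap u s l₀ := (hiff' q).1 hql
      have hrec := ih ls ls' (List.isChain_cons_cons.1 hch).2 h1' (by simpa using h2'')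
      subst hp hq
      refine ⟨by simp [hrec.1], ?_⟩
      intro l hl
      rcases List.mem_cons.1 hl with rfl | hl'
      · exact hAdm
      · exact hrec.2 l hl'

lemma adm_lex {u s : ℕ} (hu1 : 1 ≤ u) (hun : u ≤ n) (hs1 : 1 ≤ s) (hsn : s ≤ n)
    {p q : ℕ × ℕ} (hp : Adm u n p) (hq : Adm u n q) :
    lexLt q p ↔ lexLt (Tmap u s q) (Tmap u s p) := by
  have huz : (1:ℤ) ≤ (u:ℤ) := by exact_mod_cast hu1
  have hsz : (1:ℤ) ≤ (s:ℤ) := by exact_mod_cast hs1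
  have hunz : (u:ℤ) ≤ (n:ℤ) := by exact_mod_cast hun
  have hsnz : (s:ℤ) ≤ (n:ℤ) := by exact_mod_cast hsn
  have key : ∀ a b : ℕ, 1 ≤ a → a ≤ n → a ≠ u → 1 ≤ b → b ≤ n → b ≠ u →
      (a < b ↔ (gfun (u:ℤ) (s:ℤ) (a:ℤ)).toNat < (gfun (u:ℤ) (s:ℤ) (b:ℤ)).toNat) := by
    intro a b ha1 han hau hb1 hbn hbu
    have hga : 1 ≤ gfun (u:ℤ) (s:ℤ) (a:ℤ) := gfun_pos huz hsz (by exact_mod_cast ha1)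
    have hgb : 1 ≤ gfun (u:ℤ) (s:ℤ) (b:ℤ) := gfun_pos huz hsz (by exact_mod_cast hb1)
    have h1 := gfun_mono (n := (n:ℤ)) huz hunz hsz hsnz
      (show (1:ℤ) ≤ (a:ℤ) by exact_mod_cast ha1) (show (a:ℤ) ≤ (n:ℤ) by exact_mod_cast han)
      (show (a:ℤ) ≠ (u:ℤ) by exact_mod_cast hau) (show (1:ℤ) ≤ (b:ℤ) by exact_mod_cast hb1)
      (show (b:ℤ) ≤ (n:ℤ) by exact_mod_cast hbn) (show (b:ℤ) ≠ (u:ℤ) by exact_mod_cast hbu)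
    have h2 := gfun_mono (n := (n:ℤ)) huz hunz hsz hsnz
      (show (1:ℤ) ≤ (b:ℤ) by exact_mod_cast hb1) (show (b:ℤ) ≤ (n:ℤ) by exact_mod_cast hbn)
      (show (b:ℤ) ≠ (u:ℤ) by exact_mod_cast hbu) (show (1:ℤ) ≤ (a:ℤ) by exact_mod_cast ha1)
      (show (a:ℤ) ≤ (n:ℤ) by exact_mod_cast han) (show (a:ℤ) ≠ (u:ℤ) by exact_mod_cast hau)
    constructor
    · intro hab
      have hc : (a:ℤ) < (b:ℤ) := by exact_mod_cast hab
      have hd := h1.1 hc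
      omega
    · intro hab
      rcases Nat.lt_trichotomy a b with hx | hx | hx
      · exact hx
      · exfalso
        subst hx
        omega
      · exfalso
        have hc : (b:ℤ) < (a:ℤ) := by exact_mod_cast hx
        have hd := h2.1 hc
        omega
  rcases hp with rfl | ⟨hp1, hp2, hp3, hp4⟩
  · rcases hq with rfl | ⟨hq1, hq2, hq3, hq4⟩
    · rw [Tmap_one]
    · have hq1' : q.1 ≠ 1 := by omega
      unfold Tmap lexLt
      rw [if_neg hq1', if_pos rfl]
      simp only
      omega
  · rcases hq with rfl | ⟨hq1, hq2, hq3, hq4⟩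
    · have hp1' : p.1 ≠ 1 := by omega
      unfold Tmap lexLt
      rw [if_neg hp1', if_pos rfl]
      simp only
      omega
    · have hp1' : p.1 ≠ 1 := by omega
      have hq1' : q.1 ≠ 1 := by omega
      unfold Tmap lexLt
      rw [if_neg hp1', if_neg hq1']
      simp only
      constructor
      · rintro (h | ⟨he, hlt⟩)
        · exact Or.inl h
        · exact Or.inr ⟨he, (key q.2 p.2 hq2 hq3 hq4 hp2 hp3 hp4).1 hlt⟩
      · rintro (h | ⟨he, hlt⟩)
        · exact Or.inl h
        · exact Or.inr ⟨he, (key q.2 p.2 hq2 hq3 hq4 hp2 hp3 hp4).2 hlt⟩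

lemma descent_transport {u s : ℕ} (hu1 : 1 ≤ u) (hun : u ≤ n) (hs1 : 1 ≤ s) (hsn : s ≤ n)
    {l₁ : List (ℕ × ℕ)} (hAdm : ∀ l ∈ l₁, Adm u n l) (i : ℕ) :
    DescentAt l₁ i ↔ DescentAt (l₁.map (Tmap u s)) i := by
  constructor
  · rintro ⟨p, q, hp, hq, hlt⟩
    refine ⟨Tmap u s p, Tmap u s q, ?_, ?_, ?_⟩
    · rw [List.getElem?_map, hp]; rfl
    · rw [List.getElem?_map, hq]; rfl
    · exact (adm_lex hu1 hun hs1 hsn (hAdm p (List.mem_of_getElem? hp))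
        (hAdm q (List.mem_of_getElem? hq))).1 hlt
  · rintro ⟨p', q', hp', hq', hlt⟩
    rw [List.getElem?_map] at hp' hq'
    cases hp1 : l₁[i]? with
    | none => rw [hp1] at hp'; simp at hp'
    | some p =>
      cases hq1 : l₁[i+1]? with
      | none => rw [hq1] at hq'; simp at hq'
      | some q =>
        rw [hp1] at hp'
        rw [hq1] at hq'
        simp only [Option.map_some, Option.some.injEq] at hp' hq'
        refine ⟨p, q, hp1, hq1, ?_⟩
        rw [← hp', ← hq'] at hlt
        exact (adm_lex hu1 hun hs1 hsn (hAdm p (List.mem_of_getElem? hp1))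
          (hAdm q (List.mem_of_getElem? hq1))).2 hlt

end ChainsBij
/-- For `1 ≤ u, s ≤ n` with `u ≠ s`, there is a bijection between the maximal chains of
`L(D_{n,u})` not entirely contained in `L(D_{n,u−1})` and the maximal chains of `L(D_{n,s})`
not entirely contained in `L(D_{n,s−1})`, such that corresponding chains have λ-descents at
exactly the same positions. -/
theorem chains_bijection_same_descents (n u s : ℕ) (hu1 : 1 ≤ u) (hun : u ≤ n)
    (hs1 : 1 ≤ s) (hsn : s ≤ n) (hus : u ≠ s) :
    ∃ Φ : {c : List (SignedPartition n) //
            IsMaxChainLD u c ∧ ¬ ∀ z ∈ c, memLD (u - 1) z} ≃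
          {c : List (SignedPartition n) //
            IsMaxChainLD s c ∧ ¬ ∀ z ∈ c, memLD (s - 1) z},
      ∀ (c : {c : List (SignedPartition n) //
               IsMaxChainLD u c ∧ ¬ ∀ z ∈ c, memLD (u - 1) z})
        (ℓ₁ ℓ₂ : List (ℕ × ℕ)),
        ELLabelSeq c.val ℓ₁ → ELLabelSeq (Φ c).val ℓ₂ →
        ∀ i : ℕ, DescentAt ℓ₁ i ↔ DescentAt ℓ₂ i := by
  classical
  have hinv1 : ∀ c : List (SignedPartition n),
      (c.map (ChainsBij.gP hu1 hun hs1 hsn)).map (ChainsBij.gP hs1 hsn hu1 hun) = c := by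
    intro c
    rw [List.map_map]
    have hfun : (ChainsBij.gP hs1 hsn hu1 hun) ∘ (ChainsBij.gP hu1 hun hs1 hsn) = id :=
      funext (ChainsBij.gP_inv hu1 hun hs1 hsn)
    rw [hfun, List.map_id]
  have hinv2 : ∀ c : List (SignedPartition n),
      (c.map (ChainsBij.gP hs1 hsn hu1 hun)).map (ChainsBij.gP hu1 hun hs1 hsn) = c := by
    intro c
    rw [List.map_map]
    have hfun : (ChainsBij.gP hu1 hun hs1 hsn) ∘ (ChainsBij.gP hs1 hsn hu1 hun) = id :=
      funext (ChainsBij.gP_inv hs1 hsn hu1 hun)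
    rw [hfun, List.map_id]
  refine ⟨⟨fun c => ⟨c.val.map (ChainsBij.gP hu1 hun hs1 hsn),
      (ChainsBij.chain_transport hu1 hun hs1 hsn c.2.1 c.2.2).1,
      (ChainsBij.chain_transport hu1 hun hs1 hsn c.2.1 c.2.2).2.1⟩,
    fun d => ⟨d.val.map (ChainsBij.gP hs1 hsn hu1 hun),
      (ChainsBij.chain_transport hs1 hsn hu1 hun d.2.1 d.2.2).1,
      (ChainsBij.chain_transport hs1 hsn hu1 hun d.2.1 d.2.2).2.1⟩,
    fun c => Subtype.ext (hinv1 c.val), fun d => Subtype.ext (hinv2 d.val)⟩, ?_⟩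
  intro c ℓ₁ ℓ₂ h1 h2 i
  obtain ⟨_, _, hEP⟩ := ChainsBij.chain_transport hu1 hun hs1 hsn c.2.1 c.2.2
  have hseq := ChainsBij.seq_transport hu1 hun hs1 hsn c.val ℓ₁ ℓ₂ hEP h1 h2
  rw [hseq.1]
  exact ChainsBij.descent_transport hu1 hun hs1 hsn hseq.2 i
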